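/- arXiv:2605.24714 — 9 statements merged into one kernel-verified Lean document; each statement's English description precedes it below -/
import Mathlib

section
/- Let ρ ∈ (1, 1/γ). Then for every V : S → ℝ with ‖V‖_w < ∞ one has ‖TV‖_w < ∞, and for all V, W : S → ℝ with ‖V‖_w < ∞ and ‖W‖_w < ∞, ‖TV − TW‖_w ≤ γ·ρ·‖V − W‖_w. In particular, since γρ < 1, T is a contraction on the Banach space {V : S → ℝ : ‖V‖_w < ∞} and has a unique fixed point there. -/
/-- Action-value for sensing (`u = 0`). -/
noncomputable def Q0 (γ lam0 c0 : ℝ) (V : ℕ → ℕ → ℝ) (m b : ℕ) : ℝ :=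
  (m : ℝ) + c0 + γ * (lam0 * V (m + 1) 1 + (1 - lam0) * V (m + 1) (b + 1))

/-- Action-value for communication (`u = 1`). -/
noncomputable def Q1 (γ lam1 c1 : ℝ) (V : ℕ → ℕ → ℝ) (m b : ℕ) : ℝ :=
  (m : ℝ) + c1 + γ * (lam1 * V (b + 1) (b + 1) + (1 - lam1) * V (m + 1) (b + 1))

/-- Action-value for joint sensing and communication (`u = 2`). -/
noncomputable def Q2 (γ lam2 c2 : ℝ) (V : ℕ → ℕ → ℝ) (m b : ℕ) : ℝ :=
  (m : ℝ) + c2 + γ * (lam2 * V (b + 1) 1 + (1 - lam2) * V (m + 1) (b + 1))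

/-- The Bellman operator `T`. -/
noncomputable def Tbell (γ lam0 lam1 lam2 c0 c1 c2 : ℝ) (V : ℕ → ℕ → ℝ) (m b : ℕ) : ℝ :=
  min (Q0 γ lam0 c0 V m b) (min (Q1 γ lam1 c1 V m b) (Q2 γ lam2 c2 V m b))


/-!
Dividing by the weight `ρ ^ m` identifies functions of finite weighted norm with `ℓ^∞(S)`, a
Banach space. Every action value is `m + c` plus `γ` times a convex combination of values at
states whose first coordinate is at most `m + 1`; so if `|V - W| ≤ K ρ ^ m` on `S`, the action
values of `V` and `W` differ by at most `γ K ρ ^ (m + 1)`, and so do their minima. Thus `T` is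
`γρ`-Lipschitz for the weighted norm. As `T 0 = m + min cᵢ` grows only linearly, `T` preserves
finite weighted norm, and Banach's fixed point theorem on `ℓ^∞(S)` gives the fixed point.
-/

open Function Set
open scoped ENNReal

section WeightedContraction

variable {α : Type*} (P : Set α) (w : α → ℝ)

def WeightedBounded (V : α → ℝ) : Prop :=
  ∃ C, ∀ a ∈ P, |V a| ≤ C * w a

def WeightedLipschitzWith (q : ℝ) (T : (α → ℝ) → α → ℝ) : Prop :=
  ∀ V W : α → ℝ, ∀ K, 0 ≤ K → (∀ a ∈ P, |V a - W a| ≤ K * w a) →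
    ∀ a ∈ P, |T V a - T W a| ≤ q * K * w a

variable {P w}

theorem WeightedBounded.memℓp {V : α → ℝ} (hV : WeightedBounded P w V)
    (hw : ∀ a ∈ P, 0 < w a) : Memℓp (fun a : P => V a / w a) ∞ := by
  obtain ⟨C, hC⟩ := hV
  refine memℓp_infty ⟨C, ?_⟩
  rintro _ ⟨a, rfl⟩
  dsimp only
  rw [Real.norm_eq_abs, abs_div, abs_of_pos (hw a a.2), div_le_iff₀ (hw a a.2)]
  exact hC a a.2

open Classical in
variable (w) in
noncomputable def ofWeightedLp (f : lp (fun _ : P => ℝ) ∞) (a : α) : ℝ :=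
  if h : a ∈ P then f ⟨a, h⟩ * w a else 0

theorem ofWeightedLp_apply (f : lp (fun _ : P => ℝ) ∞) {a : α} (ha : a ∈ P) :
    ofWeightedLp w f a = f ⟨a, ha⟩ * w a :=
  dif_pos ha

theorem abs_ofWeightedLp_sub_le (hw : ∀ a ∈ P, 0 ≤ w a) (f g : lp (fun _ : P => ℝ) ∞)
    {a : α} (ha : a ∈ P) :
    |ofWeightedLp w f a - ofWeightedLp w g a| ≤ ‖f - g‖ * w a := by
  rw [ofWeightedLp_apply f ha, ofWeightedLp_apply g ha, ← sub_mul, abs_mul,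
    abs_of_nonneg (hw a ha)]
  gcongr
  · exact hw a ha
  · simpa using lp.norm_apply_le_norm ENNReal.top_ne_zero (f - g) ⟨a, ha⟩

theorem weightedBounded_ofWeightedLp (hw : ∀ a ∈ P, 0 ≤ w a) (f : lp (fun _ : P => ℝ) ∞) :
    WeightedBounded P w (ofWeightedLp w f) :=
  ⟨‖f‖, fun a ha => by
    simpa [ofWeightedLp_apply _ ha] using abs_ofWeightedLp_sub_le hw f 0 ha⟩

namespace WeightedLipschitzWith

variable {q : ℝ} {T : (α → ℝ) → α → ℝ}

theorem eqOn (hT : WeightedLipschitzWith P w q T) {V W : α → ℝ} (h : EqOn V W P) :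
    EqOn (T V) (T W) P := fun a ha => by
  have := hT V W 0 le_rfl (fun a ha => by simp [h ha]) a ha
  rwa [mul_zero, zero_mul, abs_nonpos_iff, sub_eq_zero] at this

theorem weightedBounded (hT : WeightedLipschitzWith P w q T) (hw : ∀ a ∈ P, 0 ≤ w a)
    (h0 : WeightedBounded P w (T 0)) {V : α → ℝ} (hV : WeightedBounded P w V) :
    WeightedBounded P w (T V) := by
  obtain ⟨C₀, hC₀⟩ := h0
  obtain ⟨C, hC⟩ := hV
  refine ⟨q * max C 0 + C₀, fun a ha => ?_⟩
  have hV0 : ∀ a ∈ P, |V a - (0 : α → ℝ) a| ≤ max C 0 * w a := fun a ha => by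
    simpa using (hC a ha).trans (by gcongr; exacts [hw a ha, le_max_left _ _])
  calc |T V a| ≤ |T V a - T 0 a| + |T 0 a| := by
        linarith [abs_sub_abs_le_abs_sub (T V a) (T 0 a)]
    _ ≤ q * max C 0 * w a + C₀ * w a :=
        add_le_add (hT V 0 _ (le_max_right _ _) hV0 a ha) (hC₀ a ha)
    _ = (q * max C 0 + C₀) * w a := by ring

theorem exists_fixedPt_unique (hT : WeightedLipschitzWith P w q T) (hw : ∀ a ∈ P, 0 < w a)
    (hq₀ : 0 ≤ q) (hq : q < 1) (h0 : WeightedBounded P w (T 0)) :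
    ∃ V, (WeightedBounded P w V ∧ ∀ a ∈ P, V a = T V a) ∧
      ∀ V', (WeightedBounded P w V' ∧ ∀ a ∈ P, V' a = T V' a) → ∀ a ∈ P, V' a = V a := by
  have hw₀ : ∀ a ∈ P, 0 ≤ w a := fun a ha => (hw a ha).le
  let toLp (V : α → ℝ) (hV : WeightedBounded P w V) : lp (fun _ : P => ℝ) ∞ :=
    ⟨_, hV.memℓp hw⟩
  have ofWeightedLp_toLp (V hV) : EqOn (ofWeightedLp w (toLp V hV)) V P := fun a ha => by
    rw [ofWeightedLp_apply _ ha]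
    exact div_mul_cancel₀ _ (hw a ha).ne'
  let Φ (f : lp (fun _ : P => ℝ) ∞) : lp (fun _ : P => ℝ) ∞ :=
    toLp (T (ofWeightedLp w f))
      (hT.weightedBounded hw₀ h0 (weightedBounded_ofWeightedLp hw₀ f))
  have hΦ : ContractingWith q.toNNReal Φ := by
    refine ⟨Real.toNNReal_lt_one.2 hq, LipschitzWith.of_dist_le_mul fun f g => ?_⟩
    rw [dist_eq_norm, dist_eq_norm, Real.coe_toNNReal _ hq₀]
    refine lp.norm_le_of_forall_le (by positivity) fun a => ?_
    rw [lp.coeFn_sub, Pi.sub_apply, Real.norm_eq_abs]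
    change |T _ a / w a - T _ a / w a| ≤ _
    rw [← sub_div, abs_div, abs_of_pos (hw a a.2), div_le_iff₀ (hw a a.2)]
    exact hT _ _ _ (norm_nonneg _) (fun b hb => abs_ofWeightedLp_sub_le hw₀ f g hb) a a.2
  have isFixedPt_toLp (V hV) (hVT : ∀ a ∈ P, V a = T V a) : IsFixedPt Φ (toLp V hV) := by
    ext a
    change T _ a / w a = V a / w a
    rw [hT.eqOn (ofWeightedLp_toLp V hV) a.2, ← hVT a a.2]
  set f := hΦ.fixedPoint Φ
  refine ⟨ofWeightedLp w f, ⟨weightedBounded_ofWeightedLp hw₀ f, fun a ha => ?_⟩,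
    fun V ⟨hV, hVT⟩ a ha => ?_⟩
  · have hf : Φ f ⟨a, ha⟩ = f ⟨a, ha⟩ := congrArg (· ⟨a, ha⟩) hΦ.fixedPoint_isFixedPt
    change T _ a / w a = _ at hf
    rw [ofWeightedLp_apply _ ha, ← hf, div_mul_cancel₀ _ (hw a ha).ne']
  · rw [← ofWeightedLp_toLp V hV ha, hΦ.fixedPoint_unique (isFixedPt_toLp V hV hVT)]

end WeightedLipschitzWith

end WeightedContraction

theorem natCast_le_pow_div_sub_one {K : Type*} [Field K] [LinearOrder K]
    [IsStrictOrderedRing K] {ρ : K} (hρ : 1 < ρ) (n : ℕ) : (n : K) ≤ ρ ^ n / (ρ - 1) := by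
  rw [le_div_iff₀ (sub_pos.2 hρ)]
  linarith [one_add_mul_sub_le_pow (by linarith : (-1 : K) ≤ ρ) n]

theorem abs_add_mul_convexComb_sub_le {r γ lam x x' y y' A : ℝ} (hγ : 0 ≤ γ) (hl₀ : 0 ≤ lam)
    (hl₁ : lam ≤ 1) (hx : |x - x'| ≤ A) (hy : |y - y'| ≤ A) :
    |r + γ * (lam * x + (1 - lam) * y) - (r + γ * (lam * x' + (1 - lam) * y'))| ≤ γ * A := by
  have hcomb : |lam * (x - x') + (1 - lam) * (y - y')| ≤ A := by
    rw [abs_le] at hx hy ⊢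
    constructor <;> nlinarith
  calc _ = |γ * (lam * (x - x') + (1 - lam) * (y - y'))| := by ring_nf
    _ ≤ γ * A := by rw [abs_mul, abs_of_nonneg hγ]; gcongr

def bellmanStates : Set (ℕ × ℕ) := {p | 1 ≤ p.2 ∧ p.2 ≤ p.1}

noncomputable def bellmanOp (γ lam0 lam1 lam2 c0 c1 c2 : ℝ) (V : ℕ × ℕ → ℝ) : ℕ × ℕ → ℝ :=
  uncurry (Tbell γ lam0 lam1 lam2 c0 c1 c2 (curry V))

section Bellman

variable {γ lam0 lam1 lam2 c0 c1 c2 ρ : ℝ}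

theorem weightedLipschitzWith_bellmanOp (hγ : 0 ≤ γ) (hρ : 1 ≤ ρ)
    (hl0 : 0 ≤ lam0) (hl0' : lam0 ≤ 1) (hl1 : 0 ≤ lam1) (hl1' : lam1 ≤ 1)
    (hl2 : 0 ≤ lam2) (hl2' : lam2 ≤ 1) :
    WeightedLipschitzWith bellmanStates (fun p => ρ ^ p.1) (γ * ρ)
      (bellmanOp γ lam0 lam1 lam2 c0 c1 c2) := by
  rintro V W K hK hVW ⟨m, b⟩ ⟨hb, hbm⟩
  have hnext : ∀ p ∈ bellmanStates, p.1 ≤ m + 1 → |V p - W p| ≤ K * ρ ^ (m + 1) :=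
    fun p hp hpm => (hVW p hp).trans (by dsimp only; gcongr)
  have h₁ := hnext (m + 1, 1) ⟨le_rfl, by omega⟩ le_rfl
  have h₂ := hnext (m + 1, b + 1) ⟨by omega, by omega⟩ le_rfl
  have h₃ := hnext (b + 1, b + 1) ⟨by omega, le_rfl⟩ (by omega)
  have h₄ := hnext (b + 1, 1) ⟨le_rfl, by omega⟩ (by omega)
  calc |Tbell γ lam0 lam1 lam2 c0 c1 c2 (curry V) m b -
          Tbell γ lam0 lam1 lam2 c0 c1 c2 (curry W) m b|
      ≤ max |Q0 γ lam0 c0 (curry V) m b - Q0 γ lam0 c0 (curry W) m b|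
          (max |Q1 γ lam1 c1 (curry V) m b - Q1 γ lam1 c1 (curry W) m b|
            |Q2 γ lam2 c2 (curry V) m b - Q2 γ lam2 c2 (curry W) m b|) :=
        (abs_min_sub_min_le_max _ _ _ _).trans
          (max_le_max le_rfl (abs_min_sub_min_le_max _ _ _ _))
    _ ≤ γ * (K * ρ ^ (m + 1)) :=
        max_le (abs_add_mul_convexComb_sub_le hγ hl0 hl0' h₁ h₂) <| max_le
          (abs_add_mul_convexComb_sub_le hγ hl1 hl1' h₃ h₂)
          (abs_add_mul_convexComb_sub_le hγ hl2 hl2' h₄ h₂)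
    _ = γ * ρ * K * ρ ^ m := by ring

theorem weightedBounded_bellmanOp_zero (hρ : 1 < ρ) :
    WeightedBounded bellmanStates (fun p => ρ ^ p.1)
      (bellmanOp γ lam0 lam1 lam2 c0 c1 c2 0) := by
  set c := min c0 (min c1 c2)
  refine ⟨1 / (ρ - 1) + |c|, fun ⟨m, b⟩ _ => ?_⟩
  have hT : Tbell γ lam0 lam1 lam2 c0 c1 c2 (curry 0) m b = m + c := by
    simp [Tbell, Q0, Q1, Q2, c, min_add_add_left]
  calc |bellmanOp γ lam0 lam1 lam2 c0 c1 c2 0 (m, b)| = |(m : ℝ) + c| := by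
        rw [bellmanOp, uncurry_apply_pair, hT]
    _ ≤ m + |c| := by simpa using abs_add_le (m : ℝ) c
    _ ≤ ρ ^ m / (ρ - 1) + |c| * ρ ^ m :=
        add_le_add (natCast_le_pow_div_sub_one hρ m)
          (le_mul_of_one_le_right (abs_nonneg c) (one_le_pow₀ hρ.le))
    _ = (1 / (ρ - 1) + |c|) * ρ ^ m := by ring

end Bellman

theorem bellman_contraction_general
    (γ lam0 lam1 lam2 c0 c1 c2 ρ : ℝ)
    (hγ0 : 0 < γ)
    (hl0 : 0 < lam0) (hl0' : lam0 < 1)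
    (hl1 : 0 < lam1) (hl1' : lam1 < 1)
    (hl2 : 0 < lam2) (hl2' : lam2 < 1)
    (hρ1 : 1 < ρ) (hρ2 : ρ < 1 / γ) :
    (∀ V : ℕ → ℕ → ℝ,
      (∃ C : ℝ, ∀ m b : ℕ, 1 ≤ b → b ≤ m → |V m b| ≤ C * ρ ^ m) →
      ∃ C : ℝ, ∀ m b : ℕ, 1 ≤ b → b ≤ m →
        |Tbell γ lam0 lam1 lam2 c0 c1 c2 V m b| ≤ C * ρ ^ m)
    ∧
    (∀ V W : ℕ → ℕ → ℝ, ∀ K : ℝ, 0 ≤ K →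
      (∀ m b : ℕ, 1 ≤ b → b ≤ m → |V m b - W m b| ≤ K * ρ ^ m) →
      ∀ m b : ℕ, 1 ≤ b → b ≤ m →
        |Tbell γ lam0 lam1 lam2 c0 c1 c2 V m b -
            Tbell γ lam0 lam1 lam2 c0 c1 c2 W m b| ≤ γ * ρ * K * ρ ^ m)
    ∧
    (∃ Vstar : ℕ → ℕ → ℝ,
      ((∃ C : ℝ, ∀ m b : ℕ, 1 ≤ b → b ≤ m → |Vstar m b| ≤ C * ρ ^ m) ∧
        ∀ m b : ℕ, 1 ≤ b → b ≤ m →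
          Vstar m b = Tbell γ lam0 lam1 lam2 c0 c1 c2 Vstar m b) ∧
      ∀ V' : ℕ → ℕ → ℝ,
        ((∃ C : ℝ, ∀ m b : ℕ, 1 ≤ b → b ≤ m → |V' m b| ≤ C * ρ ^ m) ∧
          ∀ m b : ℕ, 1 ≤ b → b ≤ m →
            V' m b = Tbell γ lam0 lam1 lam2 c0 c1 c2 V' m b) →
        ∀ m b : ℕ, 1 ≤ b → b ≤ m → V' m b = Vstar m b) := by
  have hw : ∀ p ∈ bellmanStates, 0 < ρ ^ p.1 := fun p _ => pow_pos (by linarith) _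
  have hγρ : γ * ρ < 1 := by rwa [lt_div_iff₀ hγ0, mul_comm] at hρ2
  have hT : WeightedLipschitzWith bellmanStates (fun p => ρ ^ p.1) (γ * ρ)
      (bellmanOp γ lam0 lam1 lam2 c0 c1 c2) :=
    weightedLipschitzWith_bellmanOp hγ0.le hρ1.le hl0.le hl0'.le hl1.le hl1'.le hl2.le hl2'.le
  have h0 : WeightedBounded bellmanStates (fun p => ρ ^ p.1)
      (bellmanOp γ lam0 lam1 lam2 c0 c1 c2 0) :=
    weightedBounded_bellmanOp_zero hρ1
  obtain ⟨Vstar, ⟨⟨C, hC⟩, hfix⟩, huniq⟩ :=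
    hT.exists_fixedPt_unique hw (by positivity) hγρ h0
  refine ⟨fun V ⟨C, hC⟩ => ?_,
    fun V W K hK hVW m b hb hbm =>
      hT (uncurry V) (uncurry W) K hK (fun p hp => hVW p.1 p.2 hp.1 hp.2) (m, b) ⟨hb, hbm⟩,
    curry Vstar, ⟨⟨C, fun m b hb hbm => hC (m, b) ⟨hb, hbm⟩⟩,
      fun m b hb hbm => hfix (m, b) ⟨hb, hbm⟩⟩,
    fun V ⟨⟨C, hC⟩, hVfix⟩ m b hb hbm =>
      huniq (uncurry V) ⟨⟨C, fun p hp => hC p.1 p.2 hp.1 hp.2⟩,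
        fun p hp => hVfix p.1 p.2 hp.1 hp.2⟩ (m, b) ⟨hb, hbm⟩⟩
  obtain ⟨C', hC'⟩ := hT.weightedBounded (fun p hp => (hw p hp).le) h0
    (V := uncurry V) ⟨C, fun p hp => hC p.1 p.2 hp.1 hp.2⟩
  exact ⟨C', fun m b hb hbm => hC' (m, b) ⟨hb, hbm⟩⟩

/-- For `ρ ∈ (1, 1/γ)`, the Bellman operator maps functions of finite
weighted norm to functions of finite weighted norm, satisfies the contraction estimate
`‖TV − TW‖_w ≤ γρ‖V − W‖_w`, and has a unique fixed point of finite weighted norm. -/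
theorem bellman_contraction
    (γ lam0 lam1 lam2 c0 c1 c2 ρ : ℝ)
    (hγ0 : 0 < γ) (hγ1 : γ < 1)
    (hl0 : 0 < lam0) (hl0' : lam0 < 1)
    (hl1 : 0 < lam1) (hl1' : lam1 < 1)
    (hl2 : 0 < lam2) (hl2' : lam2 < 1)
    (hc0 : 0 ≤ c0) (hc1 : 0 ≤ c1) (hc2 : 0 ≤ c2)
    (hρ1 : 1 < ρ) (hρ2 : ρ < 1 / γ) :
    (∀ V : ℕ → ℕ → ℝ,
      (∃ C : ℝ, ∀ m b : ℕ, 1 ≤ b → b ≤ m → |V m b| ≤ C * ρ ^ m) →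
      ∃ C : ℝ, ∀ m b : ℕ, 1 ≤ b → b ≤ m →
        |Tbell γ lam0 lam1 lam2 c0 c1 c2 V m b| ≤ C * ρ ^ m)
    ∧
    (∀ V W : ℕ → ℕ → ℝ, ∀ K : ℝ, 0 ≤ K →
      (∀ m b : ℕ, 1 ≤ b → b ≤ m → |V m b - W m b| ≤ K * ρ ^ m) →
      ∀ m b : ℕ, 1 ≤ b → b ≤ m →
        |Tbell γ lam0 lam1 lam2 c0 c1 c2 V m b -
            Tbell γ lam0 lam1 lam2 c0 c1 c2 W m b| ≤ γ * ρ * K * ρ ^ m)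
    ∧
    (∃ Vstar : ℕ → ℕ → ℝ,
      ((∃ C : ℝ, ∀ m b : ℕ, 1 ≤ b → b ≤ m → |Vstar m b| ≤ C * ρ ^ m) ∧
        ∀ m b : ℕ, 1 ≤ b → b ≤ m →
          Vstar m b = Tbell γ lam0 lam1 lam2 c0 c1 c2 Vstar m b) ∧
      ∀ V' : ℕ → ℕ → ℝ,
        ((∃ C : ℝ, ∀ m b : ℕ, 1 ≤ b → b ≤ m → |V' m b| ≤ C * ρ ^ m) ∧
          ∀ m b : ℕ, 1 ≤ b → b ≤ m →
            V' m b = Tbell γ lam0 lam1 lam2 c0 c1 c2 V' m b) →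
        ∀ m b : ℕ, 1 ≤ b → b ≤ m → V' m b = Vstar m b) :=
  bellman_contraction_general γ lam0 lam1 lam2 c0 c1 c2 ρ hγ0 hl0 hl0' hl1 hl1' hl2 hl2' hρ1 hρ2
end

section
/- If V : S → ℝ is coordinatewise nondecreasing, then TV is coordinatewise nondecreasing. -/
def MonotoneOnStates (V : ℕ → ℕ → ℝ) : Prop :=
  ∀ m b m' b' : ℕ, 1 ≤ b → b ≤ m → 1 ≤ b' → b' ≤ m' → m ≤ m' → b ≤ b' → V m b ≤ V m' b'

theorem cost_add_discounted_convex_combination_le {γ lam c a a' d d' : ℝ} {m m' : ℕ}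
    (hγ : 0 ≤ γ) (h0 : 0 ≤ lam) (h1 : lam ≤ 1) (hm : m ≤ m') (ha : a ≤ a') (hd : d ≤ d') :
    (m : ℝ) + c + γ * (lam * a + (1 - lam) * d) ≤
      (m' : ℝ) + c + γ * (lam * a' + (1 - lam) * d') := by
  gcongr

section ActionValues

variable {γ lam c : ℝ} {V : ℕ → ℕ → ℝ} {m b m' b' : ℕ}

theorem MonotoneOnStates.succ_succ_le (hV : MonotoneOnStates V) (hbm : b ≤ m) (hbm' : b' ≤ m')
    (hmm : m ≤ m') (hbb : b ≤ b') : V (m + 1) (b + 1) ≤ V (m' + 1) (b' + 1) :=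
  hV _ _ _ _ (by omega) (by omega) (by omega) (by omega) (by omega) (by omega)

theorem Q0_le_Q0 (hγ : 0 ≤ γ) (h0 : 0 ≤ lam) (h1 : lam ≤ 1) (hV : MonotoneOnStates V)
    (hbm : b ≤ m) (hbm' : b' ≤ m') (hmm : m ≤ m') (hbb : b ≤ b') :
    Q0 γ lam c V m b ≤ Q0 γ lam c V m' b' :=
  cost_add_discounted_convex_combination_le hγ h0 h1 hmm
    (hV _ _ _ _ le_rfl (by omega) le_rfl (by omega) (by omega) le_rfl)
    (hV.succ_succ_le hbm hbm' hmm hbb)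

theorem Q1_le_Q1 (hγ : 0 ≤ γ) (h0 : 0 ≤ lam) (h1 : lam ≤ 1) (hV : MonotoneOnStates V)
    (hbm : b ≤ m) (hbm' : b' ≤ m') (hmm : m ≤ m') (hbb : b ≤ b') :
    Q1 γ lam c V m b ≤ Q1 γ lam c V m' b' :=
  cost_add_discounted_convex_combination_le hγ h0 h1 hmm
    (hV _ _ _ _ (by omega) le_rfl (by omega) le_rfl (by omega) (by omega))
    (hV.succ_succ_le hbm hbm' hmm hbb)

theorem Q2_le_Q2 (hγ : 0 ≤ γ) (h0 : 0 ≤ lam) (h1 : lam ≤ 1) (hV : MonotoneOnStates V)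
    (hbm : b ≤ m) (hbm' : b' ≤ m') (hmm : m ≤ m') (hbb : b ≤ b') :
    Q2 γ lam c V m b ≤ Q2 γ lam c V m' b' :=
  cost_add_discounted_convex_combination_le hγ h0 h1 hmm
    (hV _ _ _ _ le_rfl (by omega) le_rfl (by omega) (by omega) le_rfl)
    (hV.succ_succ_le hbm hbm' hmm hbb)

end ActionValues

theorem Tbell_monotone_general
    (γ lam0 lam1 lam2 c0 c1 c2 : ℝ)
    (hγ0 : 0 < γ)
    (hl0 : 0 < lam0) (hl0' : lam0 < 1)
    (hl1 : 0 < lam1) (hl1' : lam1 < 1)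
    (hl2 : 0 < lam2) (hl2' : lam2 < 1)
    (V : ℕ → ℕ → ℝ)
    (hmono : ∀ m b m' b' : ℕ, 1 ≤ b → b ≤ m → 1 ≤ b' → b' ≤ m' →
      m ≤ m' → b ≤ b' → V m b ≤ V m' b') :
    ∀ m b m' b' : ℕ, 1 ≤ b → b ≤ m → 1 ≤ b' → b' ≤ m' → m ≤ m' → b ≤ b' →
      Tbell γ lam0 lam1 lam2 c0 c1 c2 V m b ≤
        Tbell γ lam0 lam1 lam2 c0 c1 c2 V m' b' := by
  intro m b m' b' _ hbm _ hbm' hmm hbb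
  have hγ := hγ0.le
  exact min_le_min (Q0_le_Q0 hγ hl0.le hl0'.le hmono hbm hbm' hmm hbb)
    (min_le_min (Q1_le_Q1 hγ hl1.le hl1'.le hmono hbm hbm' hmm hbb)
      (Q2_le_Q2 hγ hl2.le hl2'.le hmono hbm hbm' hmm hbb))

/-- If `V` is coordinatewise nondecreasing on
`S = {(m,b) : m ≥ b ≥ 1}`, then so is `TV`. -/
theorem Tbell_monotone
    (γ lam0 lam1 lam2 c0 c1 c2 : ℝ)
    (hγ0 : 0 < γ) (hγ1 : γ < 1)
    (hl0 : 0 < lam0) (hl0' : lam0 < 1)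
    (hl1 : 0 < lam1) (hl1' : lam1 < 1)
    (hl2 : 0 < lam2) (hl2' : lam2 < 1)
    (hc0 : 0 ≤ c0) (hc1 : 0 ≤ c1) (hc2 : 0 ≤ c2)
    (V : ℕ → ℕ → ℝ)
    (hmono : ∀ m b m' b' : ℕ, 1 ≤ b → b ≤ m → 1 ≤ b' → b' ≤ m' →
      m ≤ m' → b ≤ b' → V m b ≤ V m' b') :
    ∀ m b m' b' : ℕ, 1 ≤ b → b ≤ m → 1 ≤ b' → b' ≤ m' → m ≤ m' → b ≤ b' →
      Tbell γ lam0 lam1 lam2 c0 c1 c2 V m b ≤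
        Tbell γ lam0 lam1 lam2 c0 c1 c2 V m' b' :=
  Tbell_monotone_general γ lam0 lam1 lam2 c0 c1 c2 hγ0 hl0 hl0' hl1 hl1' hl2 hl2' V hmono
end

section
/- If V : S → ℝ is discretely concave in m (for each fixed b), then TV is discretely concave in m (for each fixed b). -/
/-!
Up to an affine term in `m` and terms constant in `m` (those evaluated at `(b + 1, ·)`), each
action-value `Qᵢ(V)(·, b)` is `γ` times a nonnegative combination of `V(· + 1, 1)` and
`V(· + 1, b + 1)`, so it inherits nonpositive second differences from `V`. A pointwise minimum of
such functions keeps them: at `m + 1` the minimum is attained by one of the functions, and at `m`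
and `m + 2` the minimum lies below that same function.
-/

def secondDiff {α : Type*} [Ring α] (f : ℕ → α) (m : ℕ) : α :=
  f (m + 2) - 2 * f (m + 1) + f m

section LinearOrderedField

variable {α : Type*} [Field α] [LinearOrder α] [IsStrictOrderedRing α]

theorem secondDiff_min_nonpos {f g : ℕ → α} {m : ℕ} (hf : secondDiff f m ≤ 0)
    (hg : secondDiff g m ≤ 0) : secondDiff (fun n ↦ min (f n) (g n)) m ≤ 0 := by
  unfold secondDiff at *
  have := min_le_left (f m) (g m)
  have := min_le_right (f m) (g m)
  have := min_le_left (f (m + 2)) (g (m + 2))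
  have := min_le_right (f (m + 2)) (g (m + 2))
  rcases min_choice (f (m + 1)) (g (m + 1)) with h | h <;> simp only [h] <;> linarith

end LinearOrderedField

section ActionValues

variable (γ lam c : ℝ) (V : ℕ → ℕ → ℝ) (m b : ℕ)

theorem secondDiff_Q0 :
    secondDiff (fun n ↦ Q0 γ lam c V n b) m =
      γ * (lam * secondDiff (fun n ↦ V n 1) (m + 1) +
        (1 - lam) * secondDiff (fun n ↦ V n (b + 1)) (m + 1)) := by
  simp only [secondDiff, Q0]
  push_cast
  ring

theorem secondDiff_Q1 :
    secondDiff (fun n ↦ Q1 γ lam c V n b) m =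
      γ * ((1 - lam) * secondDiff (fun n ↦ V n (b + 1)) (m + 1)) := by
  simp only [secondDiff, Q1]
  push_cast
  ring

theorem secondDiff_Q2 :
    secondDiff (fun n ↦ Q2 γ lam c V n b) m =
      γ * ((1 - lam) * secondDiff (fun n ↦ V n (b + 1)) (m + 1)) := by
  simp only [secondDiff, Q2]
  push_cast
  ring

end ActionValues

theorem Tbell_discrete_concave_general
    (γ lam0 lam1 lam2 c0 c1 c2 : ℝ)
    (hγ0 : 0 < γ)
    (hl0 : 0 < lam0) (hl0' : lam0 < 1)
    (hl1' : lam1 < 1)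
    (hl2' : lam2 < 1)
    (V : ℕ → ℕ → ℝ)
    (hconc : ∀ m b : ℕ, 1 ≤ b → b ≤ m →
      V (m + 2) b - 2 * V (m + 1) b + V m b ≤ 0) :
    ∀ m b : ℕ, 1 ≤ b → b ≤ m →
      Tbell γ lam0 lam1 lam2 c0 c1 c2 V (m + 2) b -
        2 * Tbell γ lam0 lam1 lam2 c0 c1 c2 V (m + 1) b +
        Tbell γ lam0 lam1 lam2 c0 c1 c2 V m b ≤ 0 := by
  intro m b hb hbm
  have hV₁ : secondDiff (fun n ↦ V n 1) (m + 1) ≤ 0 := hconc (m + 1) 1 le_rfl (by omega)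
  have hVb : secondDiff (fun n ↦ V n (b + 1)) (m + 1) ≤ 0 :=
    hconc (m + 1) (b + 1) (by omega) (by omega)
  have hVb_scaled {lam : ℝ} (hlam : lam < 1) :
      γ * ((1 - lam) * secondDiff (fun n ↦ V n (b + 1)) (m + 1)) ≤ 0 :=
    mul_nonpos_of_nonneg_of_nonpos hγ0.le
      (mul_nonpos_of_nonneg_of_nonpos (sub_nonneg.2 hlam.le) hVb)
  have hQ0 : secondDiff (fun n ↦ Q0 γ lam0 c0 V n b) m ≤ 0 := by
    rw [secondDiff_Q0]
    exact mul_nonpos_of_nonneg_of_nonpos hγ0.le <| add_nonpos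
      (mul_nonpos_of_nonneg_of_nonpos hl0.le hV₁)
      (mul_nonpos_of_nonneg_of_nonpos (sub_nonneg.2 hl0'.le) hVb)
  have hQ1 : secondDiff (fun n ↦ Q1 γ lam1 c1 V n b) m ≤ 0 := by
    rw [secondDiff_Q1]; exact hVb_scaled hl1'
  have hQ2 : secondDiff (fun n ↦ Q2 γ lam2 c2 V n b) m ≤ 0 := by
    rw [secondDiff_Q2]; exact hVb_scaled hl2'
  exact secondDiff_min_nonpos hQ0 (secondDiff_min_nonpos hQ1 hQ2)

/-- If `V` is discretely concave in the first coordinate on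
`S = {(m,b) : m ≥ b ≥ 1}`, then so is `TV`. -/
theorem Tbell_discrete_concave
    (γ lam0 lam1 lam2 c0 c1 c2 : ℝ)
    (hγ0 : 0 < γ) (hγ1 : γ < 1)
    (hl0 : 0 < lam0) (hl0' : lam0 < 1)
    (hl1 : 0 < lam1) (hl1' : lam1 < 1)
    (hl2 : 0 < lam2) (hl2' : lam2 < 1)
    (hc0 : 0 ≤ c0) (hc1 : 0 ≤ c1) (hc2 : 0 ≤ c2)
    (V : ℕ → ℕ → ℝ)
    (hconc : ∀ m b : ℕ, 1 ≤ b → b ≤ m →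
      V (m + 2) b - 2 * V (m + 1) b + V m b ≤ 0) :
    ∀ m b : ℕ, 1 ≤ b → b ≤ m →
      Tbell γ lam0 lam1 lam2 c0 c1 c2 V (m + 2) b -
        2 * Tbell γ lam0 lam1 lam2 c0 c1 c2 V (m + 1) b +
        Tbell γ lam0 lam1 lam2 c0 c1 c2 V m b ≤ 0 :=
  Tbell_discrete_concave_general γ lam0 lam1 lam2 c0 c1 c2 hγ0 hl0 hl0' hl1' hl2' V hconc
end

section
/- The optimal value function V★ is coordinatewise nondecreasing and discretely concave in m; that is, V★(m,b) ≤ V★(m′,b′) whenever (m,b), (m′,b′) ∈ S with m ≤ m′ and b ≤ b′, and V★(m+2,b) − 2·V★(m+1,b) + V★(m,b) ≤ 0 for all (m,b) ∈ S. -/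
/-!
Run value iteration from `0`. Each action value is `m` plus a cost plus `γ` times a convex
combination of values at successor states that move monotonically with `(m, b)`, so the Bellman
operator preserves monotonicity; the successor states depending on `m` are `(m + 1, ·)`, so it also
preserves concavity in `m`, and a minimum of concave functions is concave. In the `ρ`-weighted
sup-distance on `S` the Bellman operator is a `γρ`-contraction with `γρ < 1`, so the iterates
converge to `V★` pointwise on `S`, and both properties pass to pointwise limits.
-/

open Set Filter Topology

def StateMonotone (V : ℕ → ℕ → ℝ) : Prop :=
  ∀ m b m' b' : ℕ, 1 ≤ b → b ≤ m → 1 ≤ b' → b' ≤ m' → m ≤ m' → b ≤ b' → V m b ≤ V m' b'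

def StateConcave (V : ℕ → ℕ → ℝ) : Prop :=
  ∀ m b : ℕ, 1 ≤ b → b ≤ m → V (m + 2) b - 2 * V (m + 1) b + V m b ≤ 0

/-- `‖V - W‖_w ≤ K` for the weight `ρ ^ (-m)` on `S`. -/
def WeightedDistLE (ρ K : ℝ) (V W : ℕ → ℕ → ℝ) : Prop :=
  ∀ m b : ℕ, 1 ≤ b → b ≤ m → |V m b - W m b| ≤ K * ρ ^ m

section ActionValue

variable {γ t c : ℝ}

theorem actionValue_le (hγ : 0 ≤ γ) (ht : t ∈ Icc 0 1) {x x' A A' B B' : ℝ}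
    (hx : x ≤ x') (hA : A ≤ A') (hB : B ≤ B') :
    x + c + γ * (t * A + (1 - t) * B) ≤ x' + c + γ * (t * A' + (1 - t) * B') := by
  have : 0 ≤ 1 - t := sub_nonneg.2 ht.2
  have ht0 : 0 ≤ t := ht.1
  gcongr

theorem actionValue_secondDiff_nonpos (hγ : 0 ≤ γ) (ht : t ∈ Icc 0 1)
    {x₀ x₁ x₂ A₀ A₁ A₂ B₀ B₁ B₂ : ℝ} (hx : x₂ - 2 * x₁ + x₀ ≤ 0)
    (hA : A₂ - 2 * A₁ + A₀ ≤ 0) (hB : B₂ - 2 * B₁ + B₀ ≤ 0) :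
    (x₂ + c + γ * (t * A₂ + (1 - t) * B₂)) - 2 * (x₁ + c + γ * (t * A₁ + (1 - t) * B₁))
      + (x₀ + c + γ * (t * A₀ + (1 - t) * B₀)) ≤ 0 := by
  have hmix : t * (A₂ - 2 * A₁ + A₀) + (1 - t) * (B₂ - 2 * B₁ + B₀) ≤ 0 :=
    add_nonpos (mul_nonpos_of_nonneg_of_nonpos ht.1 hA)
      (mul_nonpos_of_nonneg_of_nonpos (sub_nonneg.2 ht.2) hB)
  linear_combination hx + mul_nonpos_of_nonneg_of_nonpos hγ hmix

theorem abs_actionValue_sub_le (hγ : 0 ≤ γ) (ht : t ∈ Icc 0 1) {x A A' B B' K : ℝ}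
    (hA : |A - A'| ≤ K) (hB : |B - B'| ≤ K) :
    |(x + c + γ * (t * A + (1 - t) * B)) - (x + c + γ * (t * A' + (1 - t) * B'))| ≤ γ * K := by
  have h1t : 0 ≤ 1 - t := sub_nonneg.2 ht.2
  have hmix : |t * (A - A') + (1 - t) * (B - B')| ≤ K :=
    calc |t * (A - A') + (1 - t) * (B - B')| ≤ t * |A - A'| + (1 - t) * |B - B'| := by
          simpa only [abs_mul, abs_of_nonneg ht.1, abs_of_nonneg h1t]
            using abs_add_le (t * (A - A')) ((1 - t) * (B - B'))
      _ ≤ t * K + (1 - t) * K := by gcongr; exact ht.1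
      _ = K := by ring
  calc |(x + c + γ * (t * A + (1 - t) * B)) - (x + c + γ * (t * A' + (1 - t) * B'))|
      = |γ * (t * (A - A') + (1 - t) * (B - B'))| := by congr 1; ring
    _ = γ * |t * (A - A') + (1 - t) * (B - B')| := by rw [abs_mul, abs_of_nonneg hγ]
    _ ≤ γ * K := by gcongr

end ActionValue

theorem min_secondDiff_nonpos {a₀ a₁ a₂ b₀ b₁ b₂ : ℝ} (ha : a₂ - 2 * a₁ + a₀ ≤ 0)
    (hb : b₂ - 2 * b₁ + b₀ ≤ 0) : min a₂ b₂ - 2 * min a₁ b₁ + min a₀ b₀ ≤ 0 := by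
  rcases min_choice a₁ b₁ with h | h <;> rw [h] <;>
    linarith [min_le_left a₂ b₂, min_le_right a₂ b₂, min_le_left a₀ b₀, min_le_right a₀ b₀]

section BellmanOperator

variable {γ lam0 lam1 lam2 c0 c1 c2 : ℝ}

local notation "𝒯" => Tbell γ lam0 lam1 lam2 c0 c1 c2

theorem stateMonotone_Tbell (hγ : 0 ≤ γ) (h0 : lam0 ∈ Icc 0 1) (h1 : lam1 ∈ Icc 0 1)
    (h2 : lam2 ∈ Icc 0 1) {V : ℕ → ℕ → ℝ} (hV : StateMonotone V) : StateMonotone (𝒯 V) := by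
  intro m b m' b' hb hbm hb' hbm' hmm hbb
  have hx : (m : ℝ) ≤ m' := by exact_mod_cast hmm
  have hstay := hV (m + 1) (b + 1) (m' + 1) (b' + 1)
    (by omega) (by omega) (by omega) (by omega) (by omega) (by omega)
  refine min_le_min (actionValue_le hγ h0 hx (hV (m + 1) 1 (m' + 1) 1 ?_ ?_ ?_ ?_ ?_ ?_) hstay)
    (min_le_min (actionValue_le hγ h1 hx (hV (b + 1) (b + 1) (b' + 1) (b' + 1) ?_ ?_ ?_ ?_ ?_ ?_)
      hstay) (actionValue_le hγ h2 hx (hV (b + 1) 1 (b' + 1) 1 ?_ ?_ ?_ ?_ ?_ ?_) hstay))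
  all_goals omega

/-- Only the sensing action jumps to a state `(m + 1, 1)` depending on `m`; there concavity of `V`
at `b = 1` is needed, while the other jump targets do not move with `m`. -/
theorem stateConcave_Tbell (hγ : 0 ≤ γ) (h0 : lam0 ∈ Icc 0 1) (h1 : lam1 ∈ Icc 0 1)
    (h2 : lam2 ∈ Icc 0 1) {V : ℕ → ℕ → ℝ} (hV : StateConcave V) : StateConcave (𝒯 V) := by
  intro m b hb hbm
  have hx : ((m + 2 : ℕ) : ℝ) - 2 * ((m + 1 : ℕ) : ℝ) + m ≤ 0 := by push_cast; linarith
  have hstay := hV (m + 1) (b + 1) (by omega) (by omega)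
  exact min_secondDiff_nonpos
    (actionValue_secondDiff_nonpos hγ h0 hx (hV (m + 1) 1 le_rfl (by omega)) hstay)
    (min_secondDiff_nonpos (actionValue_secondDiff_nonpos hγ h1 hx (by linarith) hstay)
      (actionValue_secondDiff_nonpos hγ h2 hx (by linarith) hstay))

theorem weightedDistLE_Tbell (hγ : 0 ≤ γ) (h0 : lam0 ∈ Icc 0 1) (h1 : lam1 ∈ Icc 0 1)
    (h2 : lam2 ∈ Icc 0 1) {ρ K : ℝ} (hρ : 1 ≤ ρ) (hK : 0 ≤ K) {V W : ℕ → ℕ → ℝ}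
    (h : WeightedDistLE ρ K V W) : WeightedDistLE ρ (γ * ρ * K) (𝒯 V) (𝒯 W) := by
  intro m b hb hbm
  have near : ∀ j c : ℕ, 1 ≤ c → c ≤ j → j ≤ m + 1 → |V j c - W j c| ≤ K * ρ ^ (m + 1) :=
    fun j c hc hcj hjm => (h j c hc hcj).trans (by gcongr)
  calc |𝒯 V m b - 𝒯 W m b| ≤ γ * (K * ρ ^ (m + 1)) := by
        refine (abs_min_sub_min_le_max _ _ _ _).trans (max_le ?_
          ((abs_min_sub_min_le_max _ _ _ _).trans (max_le ?_ ?_)))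
        · exact abs_actionValue_sub_le hγ h0 (near _ _ le_rfl (by omega) le_rfl)
            (near _ _ (by omega) (by omega) le_rfl)
        · exact abs_actionValue_sub_le hγ h1 (near _ _ (by omega) le_rfl (by omega))
            (near _ _ (by omega) (by omega) le_rfl)
        · exact abs_actionValue_sub_le hγ h2 (near _ _ le_rfl (by omega) (by omega))
            (near _ _ (by omega) (by omega) le_rfl)
    _ = γ * ρ * K * ρ ^ m := by ring

theorem weightedDistLE_iterate_Tbell (hγ : 0 ≤ γ) (h0 : lam0 ∈ Icc 0 1) (h1 : lam1 ∈ Icc 0 1)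
    (h2 : lam2 ∈ Icc 0 1) {ρ K : ℝ} (hρ : 1 ≤ ρ) (hK : 0 ≤ K) {V W : ℕ → ℕ → ℝ}
    (hfix : ∀ m b : ℕ, 1 ≤ b → b ≤ m → W m b = 𝒯 W m b) (h : WeightedDistLE ρ K V W) (n : ℕ) :
    WeightedDistLE ρ ((γ * ρ) ^ n * K) (𝒯^[n] V) W := by
  induction n with
  | zero => simpa using h
  | succ n ih =>
    intro m b hb hbm
    rw [Function.iterate_succ_apply', hfix m b hb hbm, pow_succ]
    have hKn : 0 ≤ (γ * ρ) ^ n * K := by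
      have hρ0 : 0 ≤ ρ := zero_le_one.trans hρ
      positivity
    exact (weightedDistLE_Tbell hγ h0 h1 h2 hρ hKn ih m b hb hbm).trans_eq (by ring)

end BellmanOperator

theorem tendsto_of_weightedDistLE_geometric {ρ q K : ℝ} (hq0 : 0 ≤ q) (hq : q < 1)
    {F : ℕ → ℕ → ℕ → ℝ} {W : ℕ → ℕ → ℝ} (h : ∀ n, WeightedDistLE ρ (q ^ n * K) (F n) W)
    {m b : ℕ} (hb : 1 ≤ b) (hbm : b ≤ m) : Tendsto (fun n => F n m b) atTop (𝓝 (W m b)) := by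
  have hbound : Tendsto (fun n => q ^ n * K * ρ ^ m) atTop (𝓝 0) := by
    simpa using ((tendsto_pow_atTop_nhds_zero_of_lt_one hq0 hq).mul_const K).mul_const (ρ ^ m)
  exact tendsto_iff_norm_sub_tendsto_zero.2
    (squeeze_zero (fun _ => norm_nonneg _) (fun n => h n m b hb hbm) hbound)

theorem StateMonotone.of_tendsto {F : ℕ → ℕ → ℕ → ℝ} {V : ℕ → ℕ → ℝ}
    (hF : ∀ n, StateMonotone (F n))
    (hlim : ∀ m b : ℕ, 1 ≤ b → b ≤ m → Tendsto (fun n => F n m b) atTop (𝓝 (V m b))) :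
    StateMonotone V := fun m b m' b' hb hbm hb' hbm' hmm hbb =>
  le_of_tendsto_of_tendsto' (hlim m b hb hbm) (hlim m' b' hb' hbm')
    fun n => hF n m b m' b' hb hbm hb' hbm' hmm hbb

theorem StateConcave.of_tendsto {F : ℕ → ℕ → ℕ → ℝ} {V : ℕ → ℕ → ℝ}
    (hF : ∀ n, StateConcave (F n))
    (hlim : ∀ m b : ℕ, 1 ≤ b → b ≤ m → Tendsto (fun n => F n m b) atTop (𝓝 (V m b))) :
    StateConcave V := fun m b hb hbm =>
  le_of_tendsto' (((hlim (m + 2) b hb (by omega)).sub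
      ((hlim (m + 1) b hb (by omega)).const_mul 2)).add (hlim m b hb hbm))
    fun n => hF n m b hb hbm

theorem Vstar_monotone_and_concave_general
    (γ lam0 lam1 lam2 c0 c1 c2 ρ : ℝ)
    (hγ0 : 0 < γ)
    (hl0 : 0 < lam0) (hl0' : lam0 < 1)
    (hl1 : 0 < lam1) (hl1' : lam1 < 1)
    (hl2 : 0 < lam2) (hl2' : lam2 < 1)
    (hρ1 : 1 < ρ) (hρ2 : ρ < 1 / γ)
    (Vstar : ℕ → ℕ → ℝ)
    (hnorm : ∃ C : ℝ, ∀ m b : ℕ, 1 ≤ b → b ≤ m → |Vstar m b| ≤ C * ρ ^ m)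
    (hfix : ∀ m b : ℕ, 1 ≤ b → b ≤ m →
      Vstar m b = Tbell γ lam0 lam1 lam2 c0 c1 c2 Vstar m b) :
    (∀ m b m' b' : ℕ, 1 ≤ b → b ≤ m → 1 ≤ b' → b' ≤ m' → m ≤ m' → b ≤ b' →
      Vstar m b ≤ Vstar m' b')
    ∧
    (∀ m b : ℕ, 1 ≤ b → b ≤ m →
      Vstar (m + 2) b - 2 * Vstar (m + 1) b + Vstar m b ≤ 0) := by
  obtain ⟨C, hC⟩ := hnorm
  have h0 : lam0 ∈ Icc 0 1 := ⟨hl0.le, hl0'.le⟩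
  have h1 : lam1 ∈ Icc 0 1 := ⟨hl1.le, hl1'.le⟩
  have h2 : lam2 ∈ Icc 0 1 := ⟨hl2.le, hl2'.le⟩
  have hγρ : γ * ρ < 1 := by linarith [(lt_div_iff₀ hγ0).mp hρ2]
  have hC0 : 0 ≤ C :=
    nonneg_of_mul_nonneg_left ((abs_nonneg _).trans (hC 1 1 le_rfl le_rfl)) (by positivity)
  have hstart : WeightedDistLE ρ C 0 Vstar := fun m b hb hbm => by
    simpa using hC m b hb hbm
  have hlim := fun m b (hb : 1 ≤ b) (hbm : b ≤ m) =>
    tendsto_of_weightedDistLE_geometric (by positivity) hγρ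
      (weightedDistLE_iterate_Tbell hγ0.le h0 h1 h2 hρ1.le hC0 hfix hstart) hb hbm
  refine ⟨StateMonotone.of_tendsto (fun n => ?_) hlim, StateConcave.of_tendsto (fun n => ?_) hlim⟩
  · exact Function.Iterate.rec StateMonotone (fun _ _ _ _ _ _ _ _ _ _ => le_rfl)
      (fun _ => stateMonotone_Tbell hγ0.le h0 h1 h2) n
  · exact Function.Iterate.rec StateConcave (fun _ _ _ _ => by simp)
      (fun _ => stateConcave_Tbell hγ0.le h0 h1 h2) n

/-- The optimal value function `V★` (the fixed point of the Bellman
operator with finite weighted norm) is coordinatewise nondecreasing and discretely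
concave in the first coordinate. -/
theorem Vstar_monotone_and_concave
    (γ lam0 lam1 lam2 c0 c1 c2 ρ : ℝ)
    (hγ0 : 0 < γ) (hγ1 : γ < 1)
    (hl0 : 0 < lam0) (hl0' : lam0 < 1)
    (hl1 : 0 < lam1) (hl1' : lam1 < 1)
    (hl2 : 0 < lam2) (hl2' : lam2 < 1)
    (hc0 : 0 ≤ c0) (hc1 : 0 ≤ c1) (hc2 : 0 ≤ c2)
    (hρ1 : 1 < ρ) (hρ2 : ρ < 1 / γ)
    (Vstar : ℕ → ℕ → ℝ)
    (hnorm : ∃ C : ℝ, ∀ m b : ℕ, 1 ≤ b → b ≤ m → |Vstar m b| ≤ C * ρ ^ m)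
    (hfix : ∀ m b : ℕ, 1 ≤ b → b ≤ m →
      Vstar m b = Tbell γ lam0 lam1 lam2 c0 c1 c2 Vstar m b) :
    (∀ m b m' b' : ℕ, 1 ≤ b → b ≤ m → 1 ≤ b' → b' ≤ m' → m ≤ m' → b ≤ b' →
      Vstar m b ≤ Vstar m' b')
    ∧
    (∀ m b : ℕ, 1 ≤ b → b ≤ m →
      Vstar (m + 2) b - 2 * Vstar (m + 1) b + Vstar m b ≤ 0) :=
  Vstar_monotone_and_concave_general γ lam0 lam1 lam2 c0 c1 c2 ρ hγ0 hl0 hl0' hl1 hl1' hl2 hl2' hρ1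
    hρ2 Vstar hnorm hfix
end

section
/- For every (m,b) ∈ S one has V★(m+1,b) − V★(m,b) ≥ 1/(1 − γ + γ·λ1). -/
/-!
Let `q = γ (1 - λ1)` and `L = 1 / (1 - q)`, so that `L = 1 + q L`. Between `(m, b)` and
`(m + 1, b)` each action-value gains `1` from the running cost, while the constant costs and the
continuation values at states with first coordinate `b + 1` cancel. So the horizontal increment
of `Q_u V` at row `m` is `1 + κ_u · x` with `κ_u ∈ [q, γ]` (this is where `λ2 ≤ λ0 ≤ λ1` enters)
and `x` an average of increments of `V` on row `m + 1`. Consequently, if the deficit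
`L - hIncr V` is at most `E` on row `m + 1`, then it is at most `γ E` on row `m` for `T V`, hence
for the fixed point `V★`. Starting from the deficit bound `L + C (ρ + 1) ρ^m` given by the growth
of `V★`, `n` iterations bound the deficit on row `m` by `γ^n (L + C (ρ + 1) ρ^(m+n))`, which tends
to `0` because `γ ρ < 1`.
-/

def hIncr (V : ℕ → ℕ → ℝ) (m b : ℕ) : ℝ := V (m + 1) b - V m b

lemma hIncr_Q0 (γ lam c : ℝ) (V : ℕ → ℕ → ℝ) (m b : ℕ) :
    hIncr (Q0 γ lam c V) m b =
      1 + γ * (lam * hIncr V (m + 1) 1 + (1 - lam) * hIncr V (m + 1) (b + 1)) := by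
  simp only [hIncr, Q0]
  push_cast
  ring

lemma hIncr_Q1 (γ lam c : ℝ) (V : ℕ → ℕ → ℝ) (m b : ℕ) :
    hIncr (Q1 γ lam c V) m b = 1 + γ * (1 - lam) * hIncr V (m + 1) (b + 1) := by
  simp only [hIncr, Q1]
  push_cast
  ring

lemma hIncr_Q2 (γ lam c : ℝ) (V : ℕ → ℕ → ℝ) (m b : ℕ) :
    hIncr (Q2 γ lam c V) m b = 1 + γ * (1 - lam) * hIncr V (m + 1) (b + 1) := by
  simp only [hIncr, Q2]
  push_cast
  ring

lemma le_hIncr_min {f g h : ℕ → ℕ → ℝ} {r : ℝ} {m b : ℕ} (hf : r ≤ hIncr f m b)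
    (hg : r ≤ hIncr g m b) (hh : r ≤ hIncr h m b) :
    r ≤ hIncr (fun m b ↦ min (f m b) (min (g m b) (h m b))) m b := by
  simp only [hIncr, le_sub_iff_add_le'] at *
  rw [← min_add_add_right, ← min_add_add_right]
  exact min_le_min hf (min_le_min hg hh)

lemma sub_mul_le_one_add_mul {γ q κ L E y : ℝ} (hq : 0 ≤ q) (hqκ : q ≤ κ) (hκγ : κ ≤ γ)
    (hL : 0 ≤ L) (hLq : L ≤ 1 + q * L) (hE : 0 ≤ E) (hy : L - E ≤ y) :
    L - γ * E ≤ 1 + κ * y :=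
  calc L - γ * E ≤ 1 + q * L - κ * E := by nlinarith
    _ ≤ 1 + κ * (L - E) := by nlinarith
    _ ≤ 1 + κ * y := by gcongr; linarith

lemma tendsto_pow_mul_add_growth {γ ρ : ℝ} (hγ : 0 ≤ γ) (hγ1 : γ < 1) (hρ : 0 ≤ ρ)
    (hγρ : γ * ρ < 1) (L K : ℝ) (m : ℕ) :
    Filter.Tendsto (fun n : ℕ ↦ γ ^ n * (L + K * ρ ^ (m + n))) Filter.atTop (nhds 0) := by
  have h := ((tendsto_pow_atTop_nhds_zero_of_lt_one hγ hγ1).mul_const L).add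
    ((tendsto_pow_atTop_nhds_zero_of_lt_one (mul_nonneg hγ hρ) hγρ).mul_const (K * ρ ^ m))
  simp only [zero_mul, add_zero] at h
  refine h.congr fun n ↦ ?_
  ring

section Bellman

variable {γ lam0 lam1 lam2 c0 c1 c2 : ℝ}

lemma sub_mul_le_hIncr_Tbell (hγ : 0 ≤ γ) (hl0 : 0 ≤ lam0) (hl0' : lam0 ≤ 1)
    (hl2 : 0 ≤ lam2) (hl21 : lam2 ≤ lam1) (hl1' : lam1 ≤ 1)
    {L E : ℝ} (hL : 0 ≤ L) (hLq : L ≤ 1 + γ * (1 - lam1) * L) (hE : 0 ≤ E)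
    {V : ℕ → ℕ → ℝ} {m b : ℕ} (h1 : L - E ≤ hIncr V (m + 1) 1)
    (hb : L - E ≤ hIncr V (m + 1) (b + 1)) :
    L - γ * E ≤ hIncr (Tbell γ lam0 lam1 lam2 c0 c1 c2 V) m b := by
  have hq : 0 ≤ γ * (1 - lam1) := mul_nonneg hγ (by linarith)
  have hqγ : γ * (1 - lam1) ≤ γ := by nlinarith
  apply le_hIncr_min
  · rw [hIncr_Q0]
    refine sub_mul_le_one_add_mul hq hqγ le_rfl hL hLq hE ?_
    nlinarith
  · rw [hIncr_Q1]
    exact sub_mul_le_one_add_mul hq le_rfl hqγ hL hLq hE hb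
  · rw [hIncr_Q2]
    exact sub_mul_le_one_add_mul hq (by nlinarith) (by nlinarith) hL hLq hE hb

lemma sub_pow_mul_le_hIncr_of_fixed (hγ : 0 ≤ γ) (hl0 : 0 ≤ lam0) (hl0' : lam0 ≤ 1)
    (hl2 : 0 ≤ lam2) (hl21 : lam2 ≤ lam1) (hl1' : lam1 ≤ 1)
    {L : ℝ} (hL : 0 ≤ L) (hLq : L ≤ 1 + γ * (1 - lam1) * L)
    {V : ℕ → ℕ → ℝ} (hfix : ∀ m b : ℕ, 1 ≤ b → b ≤ m →
      V m b = Tbell γ lam0 lam1 lam2 c0 c1 c2 V m b)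
    {E : ℕ → ℝ} (hE : ∀ m, 0 ≤ E m) (hV : ∀ m b : ℕ, 1 ≤ b → b ≤ m → L - E m ≤ hIncr V m b)
    (n : ℕ) : ∀ m b : ℕ, 1 ≤ b → b ≤ m → L - γ ^ n * E (m + n) ≤ hIncr V m b := by
  induction n with
  | zero => simpa using hV
  | succ n ih =>
    intro m b hb hbm
    have hVT : hIncr V m b = hIncr (Tbell γ lam0 lam1 lam2 c0 c1 c2 V) m b := by
      simp only [hIncr, ← hfix m b hb hbm, ← hfix (m + 1) b hb (by omega)]
    rw [hVT, pow_succ', mul_assoc, show m + (n + 1) = m + 1 + n by omega]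
    exact sub_mul_le_hIncr_Tbell hγ hl0 hl0' hl2 hl21 hl1' hL hLq
      (mul_nonneg (pow_nonneg hγ n) (hE _)) (ih _ _ le_rfl (by omega))
      (ih _ _ (by omega) (by omega))

lemma le_hIncr_of_fixed {ρ C : ℝ} (hγ : 0 ≤ γ) (hγ1 : γ < 1)
    (hl0 : 0 ≤ lam0) (hl0' : lam0 ≤ 1) (hl2 : 0 ≤ lam2) (hl21 : lam2 ≤ lam1) (hl1' : lam1 ≤ 1)
    {L : ℝ} (hL : 0 ≤ L) (hLq : L ≤ 1 + γ * (1 - lam1) * L) (hρ : 0 < ρ) (hγρ : γ * ρ < 1)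
    {V : ℕ → ℕ → ℝ} (hC : ∀ m b : ℕ, 1 ≤ b → b ≤ m → |V m b| ≤ C * ρ ^ m)
    (hfix : ∀ m b : ℕ, 1 ≤ b → b ≤ m → V m b = Tbell γ lam0 lam1 lam2 c0 c1 c2 V m b)
    {m b : ℕ} (hb : 1 ≤ b) (hbm : b ≤ m) : L ≤ hIncr V m b := by
  have hC0 : 0 ≤ C := nonneg_of_mul_nonneg_left
    ((abs_nonneg _).trans (hC 1 1 le_rfl le_rfl)) (pow_pos hρ 1)
  set E : ℕ → ℝ := fun k ↦ L + C * (ρ + 1) * ρ ^ k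
  have hE : ∀ k, 0 ≤ E k := fun k ↦ by positivity
  have hV : ∀ m b : ℕ, 1 ≤ b → b ≤ m → L - E m ≤ hIncr V m b := by
    intro m b hb hbm
    have h1 := neg_abs_le (V (m + 1) b) |>.trans' (neg_le_neg (hC (m + 1) b hb (by omega)))
    have h0 := le_abs_self (V m b) |>.trans (hC m b hb hbm)
    simp only [E, hIncr, pow_succ] at *
    linarith
  have hlim : Filter.Tendsto (fun n : ℕ ↦ L - γ ^ n * E (m + n)) Filter.atTop (nhds L) := by
    simpa using tendsto_const_nhds.sub
      (tendsto_pow_mul_add_growth hγ hγ1 hρ.le hγρ L (C * (ρ + 1)) m)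
  exact le_of_tendsto' hlim fun n ↦
    sub_pow_mul_le_hIncr_of_fixed hγ hl0 hl0' hl2 hl21 hl1' hL hLq hfix hE hV n m b hb hbm

end Bellman

theorem Vstar_horizontal_lower_bound_general
    (γ lam0 lam1 lam2 c0 c1 c2 ρ : ℝ)
    (hγ0 : 0 < γ) (hγ1 : γ < 1)
    (hl0 : 0 < lam0) (hl0' : lam0 < 1)
    (hl1' : lam1 < 1)
    (hl2 : 0 < lam2)
    (hord1 : lam2 ≤ lam0) (hord2 : lam0 ≤ lam1)
    (hρ1 : 1 < ρ) (hρ2 : ρ < 1 / γ)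
    (Vstar : ℕ → ℕ → ℝ)
    (hnorm : ∃ C : ℝ, ∀ m b : ℕ, 1 ≤ b → b ≤ m → |Vstar m b| ≤ C * ρ ^ m)
    (hfix : ∀ m b : ℕ, 1 ≤ b → b ≤ m →
      Vstar m b = Tbell γ lam0 lam1 lam2 c0 c1 c2 Vstar m b) :
    ∀ m b : ℕ, 1 ≤ b → b ≤ m →
      Vstar (m + 1) b - Vstar m b ≥ 1 / (1 - γ + γ * lam1) := by
  intro m b hb hbm
  obtain ⟨C, hC⟩ := hnorm
  have hden : 0 < 1 - γ + γ * lam1 := by nlinarith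
  have hLq : 1 / (1 - γ + γ * lam1) ≤ 1 + γ * (1 - lam1) * (1 / (1 - γ + γ * lam1)) := by
    field_simp
    linarith
  have hγρ : γ * ρ < 1 := by rwa [lt_div_iff₀' hγ0] at hρ2
  exact le_hIncr_of_fixed hγ0.le hγ1 hl0.le hl0'.le hl2.le (hord1.trans hord2) hl1'.le
    (by positivity) hLq (by linarith) hγρ hC hfix hb hbm

/-- Horizontal increments of the optimal value function are bounded
below by `1/(1 − γ + γλ1)`. -/
theorem Vstar_horizontal_lower_bound
    (γ lam0 lam1 lam2 c0 c1 c2 ρ : ℝ)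
    (hγ0 : 0 < γ) (hγ1 : γ < 1)
    (hl0 : 0 < lam0) (hl0' : lam0 < 1)
    (hl1 : 0 < lam1) (hl1' : lam1 < 1)
    (hl2 : 0 < lam2) (hl2' : lam2 < 1)
    (hc0 : 0 ≤ c0) (hc1 : 0 ≤ c1) (hc2 : 0 ≤ c2)
    (hord1 : lam2 ≤ lam0) (hord2 : lam0 ≤ lam1)
    (hord3 : c0 ≤ c1) (hord4 : c1 ≤ c2)
    (hρ1 : 1 < ρ) (hρ2 : ρ < 1 / γ)
    (Vstar : ℕ → ℕ → ℝ)
    (hnorm : ∃ C : ℝ, ∀ m b : ℕ, 1 ≤ b → b ≤ m → |Vstar m b| ≤ C * ρ ^ m)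
    (hfix : ∀ m b : ℕ, 1 ≤ b → b ≤ m →
      Vstar m b = Tbell γ lam0 lam1 lam2 c0 c1 c2 Vstar m b) :
    ∀ m b : ℕ, 1 ≤ b → b ≤ m →
      Vstar (m + 1) b - Vstar m b ≥ 1 / (1 - γ + γ * lam1) :=
  Vstar_horizontal_lower_bound_general γ lam0 lam1 lam2 c0 c1 c2 ρ hγ0 hγ1 hl0 hl0' hl1' hl2 hord1
    hord2 hρ1 hρ2 Vstar hnorm hfix
end

section
/- For every (m,b) ∈ S and every (m̃,b̃) ∈ S such that 0 ≤ m̃ − m ≤ 1 and 0 ≤ b̃ − b ≤ 1, one has 0 ≤ V★(m̃,b̃) − V★(m,b) ≤ 1/(1 − γ). -/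
/-! Value iteration `Tᵏ 0` converges to `V★` pointwise, because `T` contracts the weighted
sup-norm by the factor `γρ < 1`. Each iterate has local increments in `[0, K]` with
`K = 1/(1 - γ)`: one application of `T` turns increments in `[0, K]` into increments in
`[0, 1 + γK] = [0, K]`, since the immediate cost `m` grows by at most one and all
successor states of a local step are again local steps. A closed set of increments
survives the pointwise limit. -/

open Set Filter Topology

def IsLocalStep (m b mt bt : ℕ) : Prop :=
  1 ≤ b ∧ b ≤ m ∧ 1 ≤ bt ∧ bt ≤ mt ∧ m ≤ mt ∧ mt ≤ m + 1 ∧ b ≤ bt ∧ bt ≤ b + 1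

def LocalIncrementsIn (V : ℕ → ℕ → ℝ) (s : Set ℝ) : Prop :=
  ∀ m b mt bt, IsLocalStep m b mt bt → V mt bt - V m b ∈ s

lemma LocalIncrementsIn.of_tendsto {V : ℕ → ℕ → ℝ} {W : ℕ → ℕ → ℕ → ℝ} {s : Set ℝ}
    (hs : IsClosed s) (hW : ∀ n, LocalIncrementsIn (W n) s)
    (hlim : ∀ m b, 1 ≤ b → b ≤ m → Tendsto (fun n ↦ W n m b) atTop (𝓝 (V m b))) :
    LocalIncrementsIn V s := by
  intro m b mt bt h
  have ⟨hb, hbm, hbt, hbtmt, _⟩ := h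
  exact hs.mem_of_tendsto ((hlim mt bt hbt hbtmt).sub (hlim m b hb hbm))
    (Eventually.of_forall fun n ↦ hW n m b mt bt h)

lemma min_sub_min_mem_Icc {a b a' b' lo hi : ℝ} (ha : a - a' ∈ Icc lo hi)
    (hb : b - b' ∈ Icc lo hi) : min a b - min a' b' ∈ Icc lo hi := by
  obtain ⟨ha₁, ha₂⟩ := ha
  obtain ⟨hb₁, hb₂⟩ := hb
  constructor <;> rcases min_cases a b with ⟨h, _⟩ | ⟨h, _⟩ <;>
    rcases min_cases a' b' with ⟨h', _⟩ | ⟨h', _⟩ <;> rw [h, h'] <;> linarith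

/-- `Q0`, `Q1` and `Q2` all unfold to this shape. -/
lemma bellman_term_sub_mem_Icc {γ l c m m' x y x' y' lo hi : ℝ} (hγ : 0 ≤ γ)
    (hl : l ∈ Icc 0 1) (hx : x' - x ∈ Icc lo hi) (hy : y' - y ∈ Icc lo hi) :
    (m' + c + γ * (l * x' + (1 - l) * y')) - (m + c + γ * (l * x + (1 - l) * y)) ∈
      Icc (m' - m + γ * lo) (m' - m + γ * hi) := by
  have hcomb : l * (x' - x) + (1 - l) * (y' - y) ∈ Icc lo hi := by
    simpa only [smul_eq_mul] using
      convex_Icc lo hi hx hy hl.1 (sub_nonneg.2 hl.2) (add_sub_cancel l 1)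
  have hscaled := mul_le_mul_of_nonneg_left hcomb.1 hγ
  have hscaled' := mul_le_mul_of_nonneg_left hcomb.2 hγ
  constructor <;> linarith

section Bellman

variable {γ lam0 lam1 lam2 c0 c1 c2 : ℝ}

lemma Tbell_sub_mem_Icc (hγ : 0 ≤ γ) (hl0 : lam0 ∈ Icc 0 1)
    (hl1 : lam1 ∈ Icc 0 1) (hl2 : lam2 ∈ Icc 0 1)
    {V V' : ℕ → ℕ → ℝ} {m b m' b' : ℕ} {lo hi : ℝ}
    (hA : V' (m' + 1) 1 - V (m + 1) 1 ∈ Icc lo hi)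
    (hB : V' (m' + 1) (b' + 1) - V (m + 1) (b + 1) ∈ Icc lo hi)
    (hC : V' (b' + 1) (b' + 1) - V (b + 1) (b + 1) ∈ Icc lo hi)
    (hD : V' (b' + 1) 1 - V (b + 1) 1 ∈ Icc lo hi) :
    Tbell γ lam0 lam1 lam2 c0 c1 c2 V' m' b' - Tbell γ lam0 lam1 lam2 c0 c1 c2 V m b ∈
      Icc ((m' : ℝ) - m + γ * lo) ((m' : ℝ) - m + γ * hi) :=
  min_sub_min_mem_Icc (bellman_term_sub_mem_Icc hγ hl0 hA hB)
    (min_sub_min_mem_Icc (bellman_term_sub_mem_Icc hγ hl1 hC hB)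
      (bellman_term_sub_mem_Icc hγ hl2 hD hB))

lemma LocalIncrementsIn.map_Tbell (hγ : 0 ≤ γ) (hl0 : lam0 ∈ Icc 0 1)
    (hl1 : lam1 ∈ Icc 0 1) (hl2 : lam2 ∈ Icc 0 1)
    {V : ℕ → ℕ → ℝ} {K : ℝ} (hV : LocalIncrementsIn V (Icc 0 K)) :
    LocalIncrementsIn (Tbell γ lam0 lam1 lam2 c0 c1 c2 V) (Icc 0 (1 + γ * K)) := by
  intro m b mt bt h
  have ⟨_, _, _, _, hmmt, hmtm, _⟩ := h
  have hm : (m : ℝ) ≤ mt := by exact_mod_cast hmmt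
  have hm' : (mt : ℝ) ≤ m + 1 := by exact_mod_cast hmtm
  have hT := Tbell_sub_mem_Icc (c0 := c0) (c1 := c1) (c2 := c2) (m := m) (b := b) (m' := mt)
    (b' := bt) hγ hl0 hl1 hl2
    (hV _ _ _ _ (by unfold IsLocalStep at h ⊢; omega))
    (hV _ _ _ _ (by unfold IsLocalStep at h ⊢; omega))
    (hV _ _ _ _ (by unfold IsLocalStep at h ⊢; omega))
    (hV _ _ _ _ (by unfold IsLocalStep at h ⊢; omega))
  exact Icc_subset_Icc (by linarith) (by linarith) hT

lemma LocalIncrementsIn.iterate_Tbell (hγ : 0 ≤ γ) (hγ1 : γ < 1)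
    (hl0 : lam0 ∈ Icc 0 1) (hl1 : lam1 ∈ Icc 0 1) (hl2 : lam2 ∈ Icc 0 1)
    {V : ℕ → ℕ → ℝ} (hV : LocalIncrementsIn V (Icc 0 (1 / (1 - γ)))) (n : ℕ) :
    LocalIncrementsIn ((Tbell γ lam0 lam1 lam2 c0 c1 c2)^[n] V) (Icc 0 (1 / (1 - γ))) := by
  induction n with
  | zero => exact hV
  | succ n ih =>
    have hK : 1 + γ * (1 / (1 - γ)) = 1 / (1 - γ) := by
      field_simp [(sub_pos.2 hγ1).ne']
      ring
    rw [Function.iterate_succ_apply', ← hK]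
    exact ih.map_Tbell hγ hl0 hl1 hl2

/-- `T` is a `γρ`-contraction for the weighted sup-norm `sup |V(m, b)| ρ⁻ᵐ` over `S`. -/
lemma abs_Tbell_sub_Tbell_le (hγ : 0 ≤ γ) (hl0 : lam0 ∈ Icc 0 1)
    (hl1 : lam1 ∈ Icc 0 1) (hl2 : lam2 ∈ Icc 0 1)
    {ρ D : ℝ} (hρ : 1 ≤ ρ) (hD : 0 ≤ D) {V W : ℕ → ℕ → ℝ}
    (hVW : ∀ m b, 1 ≤ b → b ≤ m → |V m b - W m b| ≤ D * ρ ^ m)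
    {m b : ℕ} (hb : 1 ≤ b) (hbm : b ≤ m) :
    |Tbell γ lam0 lam1 lam2 c0 c1 c2 V m b - Tbell γ lam0 lam1 lam2 c0 c1 c2 W m b| ≤
      γ * ρ * D * ρ ^ m := by
  have hsucc : ∀ m' b', 1 ≤ b' → b' ≤ m' → m' ≤ m + 1 →
      V m' b' - W m' b' ∈ Icc (-(D * ρ ^ (m + 1))) (D * ρ ^ (m + 1)) := fun m' b' h1 h2 h3 ↦
    abs_le.1 <| (hVW m' b' h1 h2).trans <|
      mul_le_mul_of_nonneg_left (pow_le_pow_right₀ hρ h3) hD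
  have hT := Tbell_sub_mem_Icc (c0 := c0) (c1 := c1) (c2 := c2) (m := m) (b := b) (m' := m)
    (b' := b) hγ hl0 hl1 hl2
    (hsucc _ _ le_rfl (by omega) le_rfl) (hsucc _ _ (by omega) (by omega) le_rfl)
    (hsucc _ _ (by omega) le_rfl (by omega)) (hsucc _ _ le_rfl (by omega) (by omega))
  have hrate : γ * (D * ρ ^ (m + 1)) = γ * ρ * D * ρ ^ m := by ring
  rw [sub_self, zero_add, zero_add, mul_neg, hrate] at hT
  exact abs_le.2 hT

lemma abs_iterate_Tbell_sub_le (hγ : 0 ≤ γ) (hl0 : lam0 ∈ Icc 0 1)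
    (hl1 : lam1 ∈ Icc 0 1) (hl2 : lam2 ∈ Icc 0 1)
    {ρ C : ℝ} (hρ : 1 ≤ ρ) (hC : 0 ≤ C) {V₀ Vstar : ℕ → ℕ → ℝ}
    (hfix : ∀ m b, 1 ≤ b → b ≤ m → Vstar m b = Tbell γ lam0 lam1 lam2 c0 c1 c2 Vstar m b)
    (h₀ : ∀ m b, 1 ≤ b → b ≤ m → |V₀ m b - Vstar m b| ≤ C * ρ ^ m) (n : ℕ) :
    ∀ m b, 1 ≤ b → b ≤ m →
      |(Tbell γ lam0 lam1 lam2 c0 c1 c2)^[n] V₀ m b - Vstar m b| ≤ C * (γ * ρ) ^ n * ρ ^ m := by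
  induction n with
  | zero => simpa using h₀
  | succ n ih =>
    intro m b hb hbm
    rw [Function.iterate_succ_apply', hfix m b hb hbm, pow_succ]
    have := abs_Tbell_sub_Tbell_le (c0 := c0) (c1 := c1) (c2 := c2) hγ hl0 hl1 hl2 hρ
      (mul_nonneg hC (pow_nonneg (mul_nonneg hγ (by linarith)) n)) ih hb hbm
    linarith

lemma tendsto_iterate_Tbell (hγ : 0 ≤ γ) (hl0 : lam0 ∈ Icc 0 1)
    (hl1 : lam1 ∈ Icc 0 1) (hl2 : lam2 ∈ Icc 0 1)
    {ρ C : ℝ} (hρ : 1 ≤ ρ) (hγρ : γ * ρ < 1) (hC : 0 ≤ C) {V₀ Vstar : ℕ → ℕ → ℝ}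
    (hfix : ∀ m b, 1 ≤ b → b ≤ m → Vstar m b = Tbell γ lam0 lam1 lam2 c0 c1 c2 Vstar m b)
    (h₀ : ∀ m b, 1 ≤ b → b ≤ m → |V₀ m b - Vstar m b| ≤ C * ρ ^ m)
    {m b : ℕ} (hb : 1 ≤ b) (hbm : b ≤ m) :
    Tendsto (fun n ↦ (Tbell γ lam0 lam1 lam2 c0 c1 c2)^[n] V₀ m b) atTop (𝓝 (Vstar m b)) := by
  have hgeom : Tendsto (fun n ↦ C * (γ * ρ) ^ n * ρ ^ m) atTop (𝓝 0) := by
    simpa using ((tendsto_pow_atTop_nhds_zero_of_lt_one (by positivity) hγρ).const_mul C).mul_const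
      (ρ ^ m)
  refine tendsto_sub_nhds_zero_iff.1 (squeeze_zero_norm (fun n ↦ ?_) hgeom)
  exact abs_iterate_Tbell_sub_le hγ hl0 hl1 hl2 hρ hC hfix h₀ n m b hb hbm

end Bellman

theorem Vstar_local_upper_bound_general
    (γ lam0 lam1 lam2 c0 c1 c2 ρ : ℝ)
    (hγ0 : 0 < γ) (hγ1 : γ < 1)
    (hl0 : 0 < lam0) (hl0' : lam0 < 1)
    (hl1 : 0 < lam1) (hl1' : lam1 < 1)
    (hl2 : 0 < lam2) (hl2' : lam2 < 1)
    (hρ1 : 1 < ρ) (hρ2 : ρ < 1 / γ)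
    (Vstar : ℕ → ℕ → ℝ)
    (hnorm : ∃ C : ℝ, ∀ m b : ℕ, 1 ≤ b → b ≤ m → |Vstar m b| ≤ C * ρ ^ m)
    (hfix : ∀ m b : ℕ, 1 ≤ b → b ≤ m →
      Vstar m b = Tbell γ lam0 lam1 lam2 c0 c1 c2 Vstar m b) :
    ∀ m b mt bt : ℕ, 1 ≤ b → b ≤ m → 1 ≤ bt → bt ≤ mt →
      m ≤ mt → mt ≤ m + 1 → b ≤ bt → bt ≤ b + 1 →
      0 ≤ Vstar mt bt - Vstar m b ∧ Vstar mt bt - Vstar m b ≤ 1 / (1 - γ) := by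
  intro m b mt bt h1 h2 h3 h4 h5 h6 h7 h8
  obtain ⟨C, hC⟩ := hnorm
  have hC0 : 0 ≤ C :=
    nonneg_of_mul_nonneg_left ((abs_nonneg _).trans (hC 1 1 le_rfl le_rfl)) (by positivity)
  have hγρ : γ * ρ < 1 := (lt_div_iff₀' hγ0).1 hρ2
  have hl0 : lam0 ∈ Icc 0 1 := ⟨hl0.le, hl0'.le⟩
  have hl1 : lam1 ∈ Icc 0 1 := ⟨hl1.le, hl1'.le⟩
  have hl2 : lam2 ∈ Icc 0 1 := ⟨hl2.le, hl2'.le⟩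
  have hzero : LocalIncrementsIn 0 (Icc 0 (1 / (1 - γ))) := fun _ _ _ _ _ ↦
    ⟨by simp, by simp [(sub_pos.2 hγ1).le]⟩
  have hVstar : LocalIncrementsIn Vstar (Icc 0 (1 / (1 - γ))) :=
    .of_tendsto isClosed_Icc (hzero.iterate_Tbell hγ0.le hγ1 hl0 hl1 hl2)
      fun m b hb hbm ↦ tendsto_iterate_Tbell hγ0.le hl0 hl1 hl2 hρ1.le hγρ hC0 hfix
        (by simpa using hC) hb hbm
  exact hVstar m b mt bt ⟨h1, h2, h3, h4, h5, h6, h7, h8⟩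

/-- Local one-step increments of the optimal value function lie
between `0` and `1/(1 − γ)`. -/
theorem Vstar_local_upper_bound
    (γ lam0 lam1 lam2 c0 c1 c2 ρ : ℝ)
    (hγ0 : 0 < γ) (hγ1 : γ < 1)
    (hl0 : 0 < lam0) (hl0' : lam0 < 1)
    (hl1 : 0 < lam1) (hl1' : lam1 < 1)
    (hl2 : 0 < lam2) (hl2' : lam2 < 1)
    (hc0 : 0 ≤ c0) (hc1 : 0 ≤ c1) (hc2 : 0 ≤ c2)
    (hρ1 : 1 < ρ) (hρ2 : ρ < 1 / γ)
    (Vstar : ℕ → ℕ → ℝ)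
    (hnorm : ∃ C : ℝ, ∀ m b : ℕ, 1 ≤ b → b ≤ m → |Vstar m b| ≤ C * ρ ^ m)
    (hfix : ∀ m b : ℕ, 1 ≤ b → b ≤ m →
      Vstar m b = Tbell γ lam0 lam1 lam2 c0 c1 c2 Vstar m b) :
    ∀ m b mt bt : ℕ, 1 ≤ b → b ≤ m → 1 ≤ bt → bt ≤ mt →
      m ≤ mt → mt ≤ m + 1 → b ≤ bt → bt ≤ b + 1 →
      0 ≤ Vstar mt bt - Vstar m b ∧ Vstar mt bt - Vstar m b ≤ 1 / (1 - γ) :=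
  Vstar_local_upper_bound_general γ lam0 lam1 lam2 c0 c1 c2 ρ hγ0 hγ1 hl0 hl0' hl1 hl1' hl2 hl2' hρ1
    hρ2 Vstar hnorm hfix
end

section
/- For every α ≥ 1, the sensing action is optimal at the diagonal state (α,α): Q0(V★)(α,α) ≤ Q1(V★)(α,α) and Q0(V★)(α,α) ≤ Q2(V★)(α,α); in particular V★(α,α) = Q0(V★)(α,α). -/
/-!
On the diagonal `(α, α)` the three actions lead to the same pair of successor states
`(α+1, 1)` and `(α+1, α+1)`, so sensing beats the other two actions as soon as `V★` is
monotone in the second coordinate, given `c0 ≤ c1 ≤ c2` and `λ2 ≤ λ0`.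

Monotonicity (in both coordinates) is a contraction argument without limits of iterates:
if `V m b - V m' b' ≤ K ρ^m'` for all dominated pairs of states, then the same holds for
`T V` with `K` replaced by `γ ρ K`, because each `Qᵢ` only looks one step ahead, and
dominated pairs have dominated successors. Starting from the weighted-norm bound and
using `V★ = T V★`, the monotonicity defect of `V★` is at most `(γ ρ)^n · 2C ρ^m'` for
every `n`, hence nonpositive.
-/

def IsState (m b : ℕ) : Prop := 1 ≤ b ∧ b ≤ m

def MonotoneDefectLE (V : ℕ → ℕ → ℝ) (ρ K : ℝ) : Prop :=
  ∀ m b m' b' : ℕ, IsState m b → IsState m' b' → m ≤ m' → b ≤ b' → V m b - V m' b' ≤ K * ρ ^ m'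

lemma min_sub_min_le_of_sub_le {a a' b b' D : ℝ} (h : a - b ≤ D) (h' : a' - b' ≤ D) :
    min a a' - min b b' ≤ D := by
  have : min a a' ≤ min (b + D) (b' + D) := min_le_min (by linarith) (by linarith)
  rw [min_add_add_right] at this
  linarith

lemma convex_comb_sub_le {lam x x' y y' D : ℝ} (hl : 0 ≤ lam) (hl' : lam ≤ 1)
    (hx : x - x' ≤ D) (hy : y - y' ≤ D) :
    (lam * x + (1 - lam) * y) - (lam * x' + (1 - lam) * y') ≤ D := by
  nlinarith

section Bellman

variable {γ lam0 lam1 lam2 c0 c1 c2 ρ K : ℝ} {V : ℕ → ℕ → ℝ} {m b m' b' : ℕ}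

lemma Q0_sub_Q0_le (hγ : 0 ≤ γ) (hl : 0 ≤ lam0) (hl' : lam0 ≤ 1) (hm : m ≤ m') {D : ℝ}
    (h1 : V (m + 1) 1 - V (m' + 1) 1 ≤ D) (h2 : V (m + 1) (b + 1) - V (m' + 1) (b' + 1) ≤ D) :
    Q0 γ lam0 c0 V m b - Q0 γ lam0 c0 V m' b' ≤ γ * D := by
  have := mul_le_mul_of_nonneg_left (convex_comb_sub_le hl hl' h1 h2) hγ
  have : (m : ℝ) ≤ m' := Nat.cast_le.mpr hm
  simp only [Q0]
  linarith

lemma Q1_sub_Q1_le (hγ : 0 ≤ γ) (hl : 0 ≤ lam1) (hl' : lam1 ≤ 1) (hm : m ≤ m') {D : ℝ}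
    (h1 : V (b + 1) (b + 1) - V (b' + 1) (b' + 1) ≤ D)
    (h2 : V (m + 1) (b + 1) - V (m' + 1) (b' + 1) ≤ D) :
    Q1 γ lam1 c1 V m b - Q1 γ lam1 c1 V m' b' ≤ γ * D := by
  have := mul_le_mul_of_nonneg_left (convex_comb_sub_le hl hl' h1 h2) hγ
  have : (m : ℝ) ≤ m' := Nat.cast_le.mpr hm
  simp only [Q1]
  linarith

lemma Q2_sub_Q2_le (hγ : 0 ≤ γ) (hl : 0 ≤ lam2) (hl' : lam2 ≤ 1) (hm : m ≤ m') {D : ℝ}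
    (h1 : V (b + 1) 1 - V (b' + 1) 1 ≤ D) (h2 : V (m + 1) (b + 1) - V (m' + 1) (b' + 1) ≤ D) :
    Q2 γ lam2 c2 V m b - Q2 γ lam2 c2 V m' b' ≤ γ * D := by
  have := mul_le_mul_of_nonneg_left (convex_comb_sub_le hl hl' h1 h2) hγ
  have : (m : ℝ) ≤ m' := Nat.cast_le.mpr hm
  simp only [Q2]
  linarith

lemma MonotoneDefectLE.sub_le_of_le (hV : MonotoneDefectLE V ρ K) (hK : 0 ≤ K) (hρ : 1 ≤ ρ)
    {n : ℕ} (hs : IsState m b) (hs' : IsState m' b') (hm : m ≤ m') (hb : b ≤ b') (hn : m' ≤ n) :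
    V m b - V m' b' ≤ K * ρ ^ n :=
  (hV m b m' b' hs hs' hm hb).trans (mul_le_mul_of_nonneg_left (pow_le_pow_right₀ hρ hn) hK)

lemma MonotoneDefectLE.Tbell (hV : MonotoneDefectLE V ρ K) (hK : 0 ≤ K) (hρ : 1 ≤ ρ)
    (hγ : 0 ≤ γ) (hl0 : 0 ≤ lam0) (hl0' : lam0 ≤ 1) (hl1 : 0 ≤ lam1) (hl1' : lam1 ≤ 1)
    (hl2 : 0 ≤ lam2) (hl2' : lam2 ≤ 1) :
    MonotoneDefectLE (Tbell γ lam0 lam1 lam2 c0 c1 c2 V) ρ (γ * ρ * K) := by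
  rintro m b m' b' ⟨hb, hbm⟩ ⟨hb', hbm'⟩ hm hbb
  have hD1 : V (m + 1) 1 - V (m' + 1) 1 ≤ K * ρ ^ (m' + 1) :=
    hV.sub_le_of_le hK hρ ⟨le_rfl, by omega⟩ ⟨le_rfl, by omega⟩ (by omega) le_rfl le_rfl
  have hD2 : V (m + 1) (b + 1) - V (m' + 1) (b' + 1) ≤ K * ρ ^ (m' + 1) :=
    hV.sub_le_of_le hK hρ ⟨by omega, by omega⟩ ⟨by omega, by omega⟩ (by omega) (by omega) le_rfl
  have hD3 : V (b + 1) (b + 1) - V (b' + 1) (b' + 1) ≤ K * ρ ^ (m' + 1) :=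
    hV.sub_le_of_le hK hρ ⟨by omega, le_rfl⟩ ⟨by omega, le_rfl⟩ (by omega) (by omega) (by omega)
  have hD4 : V (b + 1) 1 - V (b' + 1) 1 ≤ K * ρ ^ (m' + 1) :=
    hV.sub_le_of_le hK hρ ⟨le_rfl, by omega⟩ ⟨le_rfl, by omega⟩ (by omega) le_rfl (by omega)
  have hKρ : γ * ρ * K * ρ ^ m' = γ * (K * ρ ^ (m' + 1)) := by ring
  rw [hKρ]
  exact min_sub_min_le_of_sub_le (Q0_sub_Q0_le hγ hl0 hl0' hm hD1 hD2) <|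
    min_sub_min_le_of_sub_le (Q1_sub_Q1_le hγ hl1 hl1' hm hD3 hD2)
      (Q2_sub_Q2_le hγ hl2 hl2' hm hD4 hD2)

lemma MonotoneDefectLE.of_abs_le {C : ℝ} (hρ : 1 ≤ ρ) (hC0 : 0 ≤ C)
    (hC : ∀ m b : ℕ, IsState m b → |V m b| ≤ C * ρ ^ m) : MonotoneDefectLE V ρ (2 * C) := by
  intro m b m' b' hs hs' hm _
  have h := (abs_le.mp (hC m b hs)).2
  have h' := (abs_le.mp (hC m' b' hs')).1
  have hpow := mul_le_mul_of_nonneg_left (pow_le_pow_right₀ hρ hm) hC0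
  linarith

lemma le_of_isFixedPt_Tbell (hγ : 0 ≤ γ) (hρ : 1 ≤ ρ) (hγρ : γ * ρ < 1)
    (hl0 : 0 ≤ lam0) (hl0' : lam0 ≤ 1) (hl1 : 0 ≤ lam1) (hl1' : lam1 ≤ 1)
    (hl2 : 0 ≤ lam2) (hl2' : lam2 ≤ 1) {C : ℝ}
    (hC : ∀ m b : ℕ, IsState m b → |V m b| ≤ C * ρ ^ m)
    (hfix : ∀ m b : ℕ, IsState m b → V m b = Tbell γ lam0 lam1 lam2 c0 c1 c2 V m b)
    (hs : IsState m b) (hs' : IsState m' b') (hm : m ≤ m') (hb : b ≤ b') :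
    V m b ≤ V m' b' := by
  have hC0 : 0 ≤ C := nonneg_of_mul_nonneg_left ((abs_nonneg _).trans (hC 1 1 ⟨le_rfl, le_rfl⟩))
    (by positivity)
  have hdefect : ∀ n : ℕ, MonotoneDefectLE V ρ ((γ * ρ) ^ n * (2 * C)) := by
    intro n
    induction n with
    | zero => simpa using MonotoneDefectLE.of_abs_le hρ hC0 hC
    | succ n ih =>
      intro m b m' b' hs hs' hm hb
      rw [hfix m b hs, hfix m' b' hs']
      refine (ih.Tbell (by positivity) hρ hγ hl0 hl0' hl1 hl1' hl2 hl2' m b m' b' hs hs' hm hb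
        (c0 := c0) (c1 := c1) (c2 := c2)).trans_eq ?_
      ring
  have hlim : Filter.Tendsto (fun n : ℕ => (γ * ρ) ^ n * (2 * C) * ρ ^ m') Filter.atTop
      (nhds 0) := by
    simpa using ((tendsto_pow_atTop_nhds_zero_of_lt_one (by positivity) hγρ).mul_const
      (2 * C)).mul_const (ρ ^ m')
  have := ge_of_tendsto' hlim fun n => hdefect n m b m' b' hs hs' hm hb
  linarith

lemma Q0_le_Q1_on_diag (hγ : 0 ≤ γ) (hl0 : 0 ≤ lam0) (hc : c0 ≤ c1) (α : ℕ)
    (hV : V (α + 1) 1 ≤ V (α + 1) (α + 1)) :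
    Q0 γ lam0 c0 V α α ≤ Q1 γ lam1 c1 V α α := by
  have := mul_nonneg (mul_nonneg hγ hl0) (sub_nonneg.mpr hV)
  simp only [Q0, Q1]
  nlinarith

lemma Q0_le_Q2_on_diag (hγ : 0 ≤ γ) (hl : lam2 ≤ lam0) (hc : c0 ≤ c2) (α : ℕ)
    (hV : V (α + 1) 1 ≤ V (α + 1) (α + 1)) :
    Q0 γ lam0 c0 V α α ≤ Q2 γ lam2 c2 V α α := by
  have := mul_nonneg (mul_nonneg hγ (sub_nonneg.mpr hl)) (sub_nonneg.mpr hV)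
  simp only [Q0, Q2]
  nlinarith

end Bellman

theorem sensing_optimal_on_diagonal_general
    (γ lam0 lam1 lam2 c0 c1 c2 ρ : ℝ)
    (hγ0 : 0 < γ)
    (hl0 : 0 < lam0) (hl0' : lam0 < 1)
    (hl1 : 0 < lam1) (hl1' : lam1 < 1)
    (hl2 : 0 < lam2) (hl2' : lam2 < 1)
    (hord1 : lam2 ≤ lam0)
    (hord3 : c0 ≤ c1) (hord4 : c1 ≤ c2)
    (hρ1 : 1 < ρ) (hρ2 : ρ < 1 / γ)
    (Vstar : ℕ → ℕ → ℝ)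
    (hnorm : ∃ C : ℝ, ∀ m b : ℕ, 1 ≤ b → b ≤ m → |Vstar m b| ≤ C * ρ ^ m)
    (hfix : ∀ m b : ℕ, 1 ≤ b → b ≤ m →
      Vstar m b = Tbell γ lam0 lam1 lam2 c0 c1 c2 Vstar m b) :
    ∀ α : ℕ, 1 ≤ α →
      Q0 γ lam0 c0 Vstar α α ≤ Q1 γ lam1 c1 Vstar α α ∧
      Q0 γ lam0 c0 Vstar α α ≤ Q2 γ lam2 c2 Vstar α α ∧
      Vstar α α = Q0 γ lam0 c0 Vstar α α := by
  intro α hα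
  obtain ⟨C, hC⟩ := hnorm
  have hγρ : γ * ρ < 1 := by rwa [lt_div_iff₀ hγ0, mul_comm] at hρ2
  have hmono : Vstar (α + 1) 1 ≤ Vstar (α + 1) (α + 1) :=
    le_of_isFixedPt_Tbell hγ0.le hρ1.le hγρ hl0.le hl0'.le hl1.le hl1'.le hl2.le hl2'.le
      (fun m b hs => hC m b hs.1 hs.2) (fun m b hs => hfix m b hs.1 hs.2)
      ⟨le_rfl, by omega⟩ ⟨by omega, le_rfl⟩ le_rfl (by omega)
  have hQ01 := Q0_le_Q1_on_diag (lam1 := lam1) hγ0.le hl0.le hord3 α hmono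
  have hQ02 := Q0_le_Q2_on_diag hγ0.le hord1 (hord3.trans hord4) α hmono
  refine ⟨hQ01, hQ02, ?_⟩
  rw [hfix α α hα le_rfl, Tbell, min_eq_left (le_min hQ01 hQ02)]

/-- The sensing action (`u = 0`) is optimal at every diagonal state
`(α, α)` with `α ≥ 1`. -/
theorem sensing_optimal_on_diagonal
    (γ lam0 lam1 lam2 c0 c1 c2 ρ : ℝ)
    (hγ0 : 0 < γ) (hγ1 : γ < 1)
    (hl0 : 0 < lam0) (hl0' : lam0 < 1)
    (hl1 : 0 < lam1) (hl1' : lam1 < 1)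
    (hl2 : 0 < lam2) (hl2' : lam2 < 1)
    (hc0 : 0 ≤ c0) (hc1 : 0 ≤ c1) (hc2 : 0 ≤ c2)
    (hord1 : lam2 ≤ lam0) (hord2 : lam0 ≤ lam1)
    (hord3 : c0 ≤ c1) (hord4 : c1 ≤ c2)
    (hρ1 : 1 < ρ) (hρ2 : ρ < 1 / γ)
    (Vstar : ℕ → ℕ → ℝ)
    (hnorm : ∃ C : ℝ, ∀ m b : ℕ, 1 ≤ b → b ≤ m → |Vstar m b| ≤ C * ρ ^ m)
    (hfix : ∀ m b : ℕ, 1 ≤ b → b ≤ m →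
      Vstar m b = Tbell γ lam0 lam1 lam2 c0 c1 c2 Vstar m b) :
    ∀ α : ℕ, 1 ≤ α →
      Q0 γ lam0 c0 Vstar α α ≤ Q1 γ lam1 c1 Vstar α α ∧
      Q0 γ lam0 c0 Vstar α α ≤ Q2 γ lam2 c2 Vstar α α ∧
      Vstar α α = Q0 γ lam0 c0 Vstar α α :=
  sensing_optimal_on_diagonal_general γ lam0 lam1 lam2 c0 c1 c2 ρ hγ0 hl0 hl0' hl1 hl1' hl2 hl2'
    hord1 hord3 hord4 hρ1 hρ2 Vstar hnorm hfix
end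

section
/- For every b ≥ 1 and every m ≥ b+1, the vertical increment satisfies C(m,b) ≤ B(b+1). -/
/-!
Each structural property of `V★` is written as `f m i ≤ 0` for a "violation" `f`, a fixed
combination of values of `V★`, so that `f` grows at most like `ρ^m`. Taking the action optimal
at one of the states involved and the Bellman inequality for that same action at the others, the
running costs cancel or have the right sign, and what remains bounds `f` in row `m` by `γ` times a
subconvex combination of `f` in row `m + 1`. Iterating, `f m i ≤ K ρ^m (γ ρ)^n` for every `n`,
and `γ ρ < 1` forces `f ≤ 0`.

The properties are obtained in order: `V★` increases in `m`, along the diagonal and in `b`; so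
sensing is optimal on the diagonal, which gives a linear recursion for the diagonal increment
`B`. Together with the discounted concavity `γ A(b+1) ≤ A(b)` this bounds the gap
`γ λ₀ (B(b+2) - A(b+1)) ≤ 1`, and that gap is exactly what the vertical increment needs.
-/

open Filter Topology

theorem nonpos_of_le_discounted_succ {ι : Type*} {γ ρ K : ℝ} (hγ : 0 ≤ γ) (hρ : 0 ≤ ρ)
    (hγρ : γ * ρ < 1) {P : ℕ → ι → Prop} {f : ℕ → ι → ℝ}
    (hgrowth : ∀ m i, P m i → f m i ≤ K * ρ ^ m)
    (hstep : ∀ m i, P m i → ∃ a₁ a₂ i₁ i₂, 0 ≤ a₁ ∧ 0 ≤ a₂ ∧ a₁ + a₂ ≤ 1 ∧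
      P (m + 1) i₁ ∧ P (m + 1) i₂ ∧ f m i ≤ γ * (a₁ * f (m + 1) i₁ + a₂ * f (m + 1) i₂))
    {m : ℕ} {i : ι} (hi : P m i) : f m i ≤ 0 := by
  set K' := max K 0
  have hiter : ∀ n m i, P m i → f m i ≤ K' * ρ ^ m * (γ * ρ) ^ n := by
    intro n
    induction n with
    | zero =>
      intro m i h
      simpa using (hgrowth m i h).trans
        (mul_le_mul_of_nonneg_right (le_max_left K 0) (pow_nonneg hρ m))
    | succ n ih =>
      intro m i h
      obtain ⟨a₁, a₂, i₁, i₂, ha₁, ha₂, hsum, h₁, h₂, hle⟩ := hstep m i h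
      set X := K' * ρ ^ (m + 1) * (γ * ρ) ^ n
      have hX : 0 ≤ X := by positivity
      calc f m i ≤ γ * (a₁ * f (m + 1) i₁ + a₂ * f (m + 1) i₂) := hle
        _ ≤ γ * (a₁ * X + a₂ * X) := by gcongr <;> exact ih _ _ ‹_›
        _ = γ * ((a₁ + a₂) * X) := by ring
        _ ≤ γ * X := by gcongr; exact mul_le_of_le_one_left hX hsum
        _ = K' * ρ ^ m * (γ * ρ) ^ (n + 1) := by ring
  have hlim : Tendsto (fun n ↦ K' * ρ ^ m * (γ * ρ) ^ n) atTop (𝓝 0) := by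
    simpa using (tendsto_pow_atTop_nhds_zero_of_lt_one (by positivity) hγρ).const_mul
      (K' * ρ ^ m)
  exact ge_of_tendsto' hlim fun n ↦ hiter n m i hi

structure IsBellmanSolution (γ lam0 lam1 lam2 c0 c1 c2 ρ : ℝ) (V : ℕ → ℕ → ℝ) : Prop where
  gamma_nonneg : 0 ≤ γ
  one_le_rho : 1 ≤ ρ
  gamma_mul_rho_lt_one : γ * ρ < 1
  lam0_mem : lam0 ∈ Set.Icc (0 : ℝ) 1
  lam1_mem : lam1 ∈ Set.Icc (0 : ℝ) 1
  lam2_mem : lam2 ∈ Set.Icc (0 : ℝ) 1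
  growth : ∃ C : ℝ, ∀ m b : ℕ, 1 ≤ b → b ≤ m → |V m b| ≤ C * ρ ^ m
  fixed : ∀ m b : ℕ, 1 ≤ b → b ≤ m → V m b = Tbell γ lam0 lam1 lam2 c0 c1 c2 V m b

namespace IsBellmanSolution

variable {γ lam0 lam1 lam2 c0 c1 c2 ρ : ℝ} {V : ℕ → ℕ → ℝ} {m b : ℕ}

theorem gamma_le_one (hV : IsBellmanSolution γ lam0 lam1 lam2 c0 c1 c2 ρ V) : γ ≤ 1 :=
  (le_mul_of_one_le_right hV.gamma_nonneg hV.one_le_rho).trans hV.gamma_mul_rho_lt_one.le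

theorem rho_nonneg (hV : IsBellmanSolution γ lam0 lam1 lam2 c0 c1 c2 ρ V) : 0 ≤ ρ :=
  zero_le_one.trans hV.one_le_rho

theorem le_Q0 (hV : IsBellmanSolution γ lam0 lam1 lam2 c0 c1 c2 ρ V) (hb : 1 ≤ b)
    (hbm : b ≤ m) : V m b ≤ Q0 γ lam0 c0 V m b :=
  (hV.fixed m b hb hbm).trans_le (min_le_left _ _)

theorem le_Q1 (hV : IsBellmanSolution γ lam0 lam1 lam2 c0 c1 c2 ρ V) (hb : 1 ≤ b)
    (hbm : b ≤ m) : V m b ≤ Q1 γ lam1 c1 V m b :=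
  (hV.fixed m b hb hbm).trans_le ((min_le_right _ _).trans (min_le_left _ _))

theorem le_Q2 (hV : IsBellmanSolution γ lam0 lam1 lam2 c0 c1 c2 ρ V) (hb : 1 ≤ b)
    (hbm : b ≤ m) : V m b ≤ Q2 γ lam2 c2 V m b :=
  (hV.fixed m b hb hbm).trans_le ((min_le_right _ _).trans (min_le_right _ _))

theorem eq_Q0_or_Q1_or_Q2 (hV : IsBellmanSolution γ lam0 lam1 lam2 c0 c1 c2 ρ V) (hb : 1 ≤ b)
    (hbm : b ≤ m) :
    V m b = Q0 γ lam0 c0 V m b ∨ V m b = Q1 γ lam1 c1 V m b ∨ V m b = Q2 γ lam2 c2 V m b := by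
  have h := hV.fixed m b hb hbm
  rw [Tbell] at h
  rcases min_choice (Q0 γ lam0 c0 V m b) (min (Q1 γ lam1 c1 V m b) (Q2 γ lam2 c2 V m b))
    with h₀ | h₀
  · exact Or.inl (h.trans h₀)
  rcases min_choice (Q1 γ lam1 c1 V m b) (Q2 γ lam2 c2 V m b) with h₁ | h₁
  · exact Or.inr (Or.inl (h.trans (h₀.trans h₁)))
  · exact Or.inr (Or.inr (h.trans (h₀.trans h₁)))

theorem exists_sub_le (hV : IsBellmanSolution γ lam0 lam1 lam2 c0 c1 c2 ρ V) :
    ∃ D, 0 ≤ D ∧ ∀ ⦃m m₁ b₁ m₂ b₂ : ℕ⦄, 1 ≤ b₁ → b₁ ≤ m₁ → m₁ ≤ m + 2 →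
      1 ≤ b₂ → b₂ ≤ m₂ → m₂ ≤ m + 2 → V m₁ b₁ - V m₂ b₂ ≤ D * ρ ^ m := by
  obtain ⟨C, hC⟩ := hV.growth
  have hρ := hV.one_le_rho
  have habs : ∀ m m' b', 1 ≤ b' → b' ≤ m' → m' ≤ m + 2 → |V m' b'| ≤ |C| * ρ ^ 2 * ρ ^ m := by
    intro m m' b' h₁ h₂ h₃
    calc |V m' b'| ≤ C * ρ ^ m' := hC m' b' h₁ h₂
      _ ≤ |C| * ρ ^ m' := by gcongr; exact le_abs_self C
      _ ≤ |C| * ρ ^ (m + 2) := by gcongr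
      _ = |C| * ρ ^ 2 * ρ ^ m := by ring
  refine ⟨2 * (|C| * ρ ^ 2), by positivity, fun m m₁ b₁ m₂ b₂ h₁ h₂ h₃ h₄ h₅ h₆ ↦ ?_⟩
  linarith [(abs_le.mp (habs m m₁ b₁ h₁ h₂ h₃)).2, (abs_le.mp (habs m m₂ b₂ h₄ h₅ h₆)).1]

theorem le_succ_fst (hV : IsBellmanSolution γ lam0 lam1 lam2 c0 c1 c2 ρ V) (hb : 1 ≤ b)
    (hbm : b ≤ m) : V m b ≤ V (m + 1) b := by
  obtain ⟨D, -, hD⟩ := hV.exists_sub_le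
  have ⟨hl0, hl0'⟩ := hV.lam0_mem
  have ⟨hl1, hl1'⟩ := hV.lam1_mem
  have ⟨hl2, hl2'⟩ := hV.lam2_mem
  suffices V m b - V (m + 1) b ≤ 0 by linarith
  refine nonpos_of_le_discounted_succ hV.gamma_nonneg hV.rho_nonneg hV.gamma_mul_rho_lt_one
    (P := fun m b ↦ 1 ≤ b ∧ b ≤ m) (f := fun m b ↦ V m b - V (m + 1) b)
    (fun m b ⟨h₁, h₂⟩ ↦ hD h₁ h₂ (by omega) h₁ (by omega) (by omega)) ?_ ⟨hb, hbm⟩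
  rintro m b ⟨h₁, h₂⟩
  rcases hV.eq_Q0_or_Q1_or_Q2 (m := m + 1) h₁ (by omega) with h | h | h
  · refine ⟨lam0, 1 - lam0, 1, b + 1, hl0, by linarith, by linarith, ⟨le_rfl, by omega⟩,
      ⟨by omega, by omega⟩, ?_⟩
    have hle := hV.le_Q0 h₁ h₂
    simp only [Q0, Nat.cast_add, Nat.cast_one, add_assoc, Nat.reduceAdd] at h hle ⊢
    linarith
  · refine ⟨1 - lam1, 0, b + 1, b + 1, by linarith, le_rfl, by linarith, ⟨by omega, by omega⟩,
      ⟨by omega, by omega⟩, ?_⟩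
    have hle := hV.le_Q1 h₁ h₂
    simp only [Q1, Nat.cast_add, Nat.cast_one, add_assoc, Nat.reduceAdd] at h hle ⊢
    linarith
  · refine ⟨1 - lam2, 0, b + 1, b + 1, by linarith, le_rfl, by linarith, ⟨by omega, by omega⟩,
      ⟨by omega, by omega⟩, ?_⟩
    have hle := hV.le_Q2 h₁ h₂
    simp only [Q2, Nat.cast_add, Nat.cast_one, add_assoc, Nat.reduceAdd] at h hle ⊢
    linarith

theorem diag_le_succ (hV : IsBellmanSolution γ lam0 lam1 lam2 c0 c1 c2 ρ V) (hm : 1 ≤ m) :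
    V m m ≤ V (m + 1) (m + 1) := by
  obtain ⟨D, -, hD⟩ := hV.exists_sub_le
  have hγ := hV.gamma_nonneg
  have ⟨hl0, hl0'⟩ := hV.lam0_mem
  have ⟨hl2, hl2'⟩ := hV.lam2_mem
  suffices V m m - V (m + 1) (m + 1) ≤ 0 by linarith
  refine nonpos_of_le_discounted_succ hγ hV.rho_nonneg hV.gamma_mul_rho_lt_one
    (P := fun m (_ : Unit) ↦ 1 ≤ m) (f := fun m _ ↦ V m m - V (m + 1) (m + 1))
    (fun m _ h ↦ hD h le_rfl (by omega) (by omega) le_rfl (by omega)) ?_ (i := ()) hm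
  rintro m - h₁
  have hA := hV.le_succ_fst (m := m + 1) (b := 1) le_rfl (by omega)
  rcases hV.eq_Q0_or_Q1_or_Q2 (m := m + 1) (b := m + 1) (by omega) le_rfl with h | h | h
  · refine ⟨1 - lam0, 0, (), (), by linarith, le_rfl, by linarith, by omega, by omega, ?_⟩
    have hle := hV.le_Q0 h₁ le_rfl
    have hmul := mul_le_mul_of_nonneg_left hA (mul_nonneg hγ hl0)
    simp only [Q0, Nat.cast_add, Nat.cast_one, add_assoc, Nat.reduceAdd] at h hle ⊢
    linarith
  · refine ⟨1, 0, (), (), zero_le_one, le_rfl, by linarith, by omega, by omega, ?_⟩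
    have hle := hV.le_Q1 h₁ le_rfl
    simp only [Q1, Nat.cast_add, Nat.cast_one, add_assoc, Nat.reduceAdd] at h hle ⊢
    linarith
  · refine ⟨1 - lam2, 0, (), (), by linarith, le_rfl, by linarith, by omega, by omega, ?_⟩
    have hle := hV.le_Q2 h₁ le_rfl
    have hmul := mul_le_mul_of_nonneg_left hA (mul_nonneg hγ hl2)
    simp only [Q2, Nat.cast_add, Nat.cast_one, add_assoc, Nat.reduceAdd] at h hle ⊢
    linarith

theorem le_succ_snd (hV : IsBellmanSolution γ lam0 lam1 lam2 c0 c1 c2 ρ V) (hb : 1 ≤ b)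
    (hbm : b < m) : V m b ≤ V m (b + 1) := by
  obtain ⟨D, -, hD⟩ := hV.exists_sub_le
  have hγ := hV.gamma_nonneg
  have ⟨hl0, hl0'⟩ := hV.lam0_mem
  have ⟨hl1, hl1'⟩ := hV.lam1_mem
  have ⟨hl2, hl2'⟩ := hV.lam2_mem
  suffices V m b - V m (b + 1) ≤ 0 by linarith
  refine nonpos_of_le_discounted_succ hγ hV.rho_nonneg hV.gamma_mul_rho_lt_one
    (P := fun m b ↦ 1 ≤ b ∧ b < m) (f := fun m b ↦ V m b - V m (b + 1))
    (fun m b ⟨h₁, h₂⟩ ↦ hD h₁ h₂.le (by omega) (by omega) h₂ (by omega)) ?_ ⟨hb, hbm⟩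
  rintro m b ⟨h₁, h₂⟩
  have hT := hV.le_succ_fst (m := b + 1) (b := 1) le_rfl (by omega)
  have hB := hV.diag_le_succ (m := b + 1) (by omega)
  rcases hV.eq_Q0_or_Q1_or_Q2 (m := m) (b := b + 1) (by omega) h₂ with h | h | h
  · refine ⟨1 - lam0, 0, b + 1, b + 1, by linarith, le_rfl, by linarith, ⟨by omega, by omega⟩,
      ⟨by omega, by omega⟩, ?_⟩
    have hle := hV.le_Q0 h₁ h₂.le
    simp only [Q0, add_assoc, Nat.reduceAdd] at h hle ⊢
    linarith
  · refine ⟨1 - lam1, 0, b + 1, b + 1, by linarith, le_rfl, by linarith, ⟨by omega, by omega⟩,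
      ⟨by omega, by omega⟩, ?_⟩
    have hle := hV.le_Q1 h₁ h₂.le
    have hmul := mul_le_mul_of_nonneg_left hB (mul_nonneg hγ hl1)
    simp only [Q1, add_assoc, Nat.reduceAdd] at h hle ⊢
    linarith
  · refine ⟨1 - lam2, 0, b + 1, b + 1, by linarith, le_rfl, by linarith, ⟨by omega, by omega⟩,
      ⟨by omega, by omega⟩, ?_⟩
    have hle := hV.le_Q2 h₁ h₂.le
    have hmul := mul_le_mul_of_nonneg_left hT (mul_nonneg hγ hl2)
    simp only [Q2, add_assoc, Nat.reduceAdd] at h hle ⊢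
    linarith

theorem snd_one_le (hV : IsBellmanSolution γ lam0 lam1 lam2 c0 c1 c2 ρ V) (hb : 1 ≤ b)
    (hbm : b ≤ m) : V m 1 ≤ V m b := by
  induction b, hb using Nat.le_induction with
  | base => exact le_rfl
  | succ n hn ih => exact (ih (by omega)).trans (hV.le_succ_snd hn (by omega))

theorem diag_eq_Q0 (hV : IsBellmanSolution γ lam0 lam1 lam2 c0 c1 c2 ρ V) (hlam : lam2 ≤ lam0)
    (hc01 : c0 ≤ c1) (hc02 : c0 ≤ c2) (hm : 1 ≤ m) : V m m = Q0 γ lam0 c0 V m m := by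
  have hγ := hV.gamma_nonneg
  have hbot := hV.snd_one_le (m := m + 1) (b := m + 1) (by omega) le_rfl
  have h01 : Q0 γ lam0 c0 V m m ≤ Q1 γ lam1 c1 V m m := by
    have := mul_le_mul_of_nonneg_left hbot (mul_nonneg hγ hV.lam0_mem.1)
    simp only [Q0, Q1]
    linarith
  have h02 : Q0 γ lam0 c0 V m m ≤ Q2 γ lam2 c2 V m m := by
    have := mul_le_mul_of_nonneg_left hbot (mul_nonneg hγ (sub_nonneg.2 hlam))
    simp only [Q0, Q2]
    linarith
  rw [hV.fixed m m hm le_rfl, Tbell, min_eq_left (le_min h01 h02)]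

theorem discounted_increment_le (hV : IsBellmanSolution γ lam0 lam1 lam2 c0 c1 c2 ρ V)
    (hb : 1 ≤ b) (hbm : b ≤ m) : γ * (V (m + 2) b - V (m + 1) b) ≤ V (m + 1) b - V m b := by
  obtain ⟨D, hD0, hD⟩ := hV.exists_sub_le
  have hγ := hV.gamma_nonneg
  have hγ1 := hV.gamma_le_one
  have ⟨hl0, hl0'⟩ := hV.lam0_mem
  have ⟨hl1, hl1'⟩ := hV.lam1_mem
  have ⟨hl2, hl2'⟩ := hV.lam2_mem
  suffices γ * (V (m + 2) b - V (m + 1) b) - (V (m + 1) b - V m b) ≤ 0 by linarith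
  refine nonpos_of_le_discounted_succ hγ hV.rho_nonneg hV.gamma_mul_rho_lt_one (K := 2 * D)
    (P := fun m b ↦ 1 ≤ b ∧ b ≤ m)
    (f := fun m b ↦ γ * (V (m + 2) b - V (m + 1) b) - (V (m + 1) b - V m b)) ?_ ?_ ⟨hb, hbm⟩
  · rintro m b ⟨h₁, h₂⟩
    have hup := hD (m := m) (m₁ := m + 2) (m₂ := m + 1) h₁ (by omega) le_rfl h₁ (by omega)
      (by omega)
    have hlo := hD (m := m) (m₁ := m) (m₂ := m + 1) h₁ h₂ (by omega) h₁ (by omega) (by omega)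
    have hDρ : 0 ≤ D * ρ ^ m := mul_nonneg hD0 (pow_nonneg hV.rho_nonneg m)
    have := (mul_le_mul_of_nonneg_left hup hγ).trans (mul_le_of_le_one_left hDρ hγ1)
    linarith
  rintro m b ⟨h₁, h₂⟩
  rcases hV.eq_Q0_or_Q1_or_Q2 (m := m + 1) h₁ (by omega) with h | h | h
  · refine ⟨lam0, 1 - lam0, 1, b + 1, hl0, by linarith, by linarith, ⟨le_rfl, by omega⟩,
      ⟨by omega, by omega⟩, ?_⟩
    have hle := hV.le_Q0 h₁ h₂
    have hmul := mul_le_mul_of_nonneg_left (hV.le_Q0 (m := m + 2) h₁ (by omega)) hγ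
    have hmid := congrArg (γ * ·) h
    simp only [Q0, Nat.cast_add, Nat.cast_one, Nat.cast_ofNat, add_assoc, Nat.reduceAdd]
      at h hle hmul hmid ⊢
    linarith
  · refine ⟨1 - lam1, 0, b + 1, b + 1, by linarith, le_rfl, by linarith, ⟨by omega, by omega⟩,
      ⟨by omega, by omega⟩, ?_⟩
    have hle := hV.le_Q1 h₁ h₂
    have hmul := mul_le_mul_of_nonneg_left (hV.le_Q1 (m := m + 2) h₁ (by omega)) hγ
    have hmid := congrArg (γ * ·) h
    simp only [Q1, Nat.cast_add, Nat.cast_one, Nat.cast_ofNat, add_assoc, Nat.reduceAdd]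
      at h hle hmul hmid ⊢
    linarith
  · refine ⟨1 - lam2, 0, b + 1, b + 1, by linarith, le_rfl, by linarith, ⟨by omega, by omega⟩,
      ⟨by omega, by omega⟩, ?_⟩
    have hle := hV.le_Q2 h₁ h₂
    have hmul := mul_le_mul_of_nonneg_left (hV.le_Q2 (m := m + 2) h₁ (by omega)) hγ
    have hmid := congrArg (γ * ·) h
    simp only [Q2, Nat.cast_add, Nat.cast_one, Nat.cast_ofNat, add_assoc, Nat.reduceAdd]
      at h hle hmul hmid ⊢
    linarith

theorem increment_gap_le (hV : IsBellmanSolution γ lam0 lam1 lam2 c0 c1 c2 ρ V)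
    (hlam : lam2 ≤ lam0) (hc01 : c0 ≤ c1) (hc02 : c0 ≤ c2) (m : ℕ) :
    γ * lam0 * ((V (m + 2) (m + 2) - V (m + 1) (m + 1)) - (V (m + 2) 1 - V (m + 1) 1)) ≤ 1 := by
  obtain ⟨D, hD0, hD⟩ := hV.exists_sub_le
  have hγ := hV.gamma_nonneg
  have hγ1 := hV.gamma_le_one
  have ⟨hl0, hl0'⟩ := hV.lam0_mem
  have hγl0 : γ * lam0 ≤ 1 := mul_le_one₀ hγ1 hl0 hl0'
  suffices
      γ * lam0 * ((V (m + 2) (m + 2) - V (m + 1) (m + 1)) - (V (m + 2) 1 - V (m + 1) 1)) - 1 ≤ 0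
    by linarith
  refine nonpos_of_le_discounted_succ hγ hV.rho_nonneg hV.gamma_mul_rho_lt_one (K := 2 * D)
    (P := fun _ (_ : Unit) ↦ True)
    (f := fun m _ ↦
      γ * lam0 * ((V (m + 2) (m + 2) - V (m + 1) (m + 1)) - (V (m + 2) 1 - V (m + 1) 1)) - 1)
    ?_ ?_ (i := ()) trivial
  · intro m _ _
    have hB := hD (m := m) (m₁ := m + 2) (m₂ := m + 1) (b₁ := m + 2) (b₂ := m + 1)
      (by omega) le_rfl le_rfl (by omega) le_rfl (by omega)
    have hA := hD (m := m) (m₁ := m + 1) (m₂ := m + 2) (b₁ := 1) (b₂ := 1)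
      le_rfl (by omega) (by omega) le_rfl (by omega) le_rfl
    have hDρ : 0 ≤ D * ρ ^ m := mul_nonneg hD0 (pow_nonneg hV.rho_nonneg m)
    have := (mul_le_mul_of_nonneg_left (add_le_add hB hA) (mul_nonneg hγ hl0)).trans
      (mul_le_of_le_one_left (add_nonneg hDρ hDρ) hγl0)
    linarith
  intro m _ _
  have hd₁ := hV.diag_eq_Q0 hlam hc01 hc02 (m := m + 1) (by omega)
  have hd₂ := hV.diag_eq_Q0 hlam hc01 hc02 (m := m + 2) (by omega)
  have hmul := mul_le_mul_of_nonneg_left (hV.discounted_increment_le (m := m + 1) (b := 1)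
    le_rfl (by omega)) (mul_nonneg hγ hl0)
  refine ⟨1 - lam0, 0, (), (), by linarith, le_rfl, by linarith, trivial, trivial, ?_⟩
  simp only [Q0, Nat.cast_add, Nat.cast_one, Nat.cast_ofNat, add_assoc, Nat.reduceAdd]
    at hd₁ hd₂ hmul ⊢
  rw [hd₁, hd₂]
  linarith

theorem mul_increment_gap_le (hV : IsBellmanSolution γ lam0 lam1 lam2 c0 c1 c2 ρ V)
    (hlam : lam2 ≤ lam0) (hc01 : c0 ≤ c1) (hc02 : c0 ≤ c2) {μ : ℝ} (hμ : 0 ≤ μ)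
    (hμ0 : μ ≤ lam0) (m : ℕ) :
    γ * μ * ((V (m + 2) (m + 2) - V (m + 1) (m + 1)) - (V (m + 2) 1 - V (m + 1) 1)) ≤ 1 := by
  have hgap := hV.increment_gap_le hlam hc01 hc02 m
  have hγ := hV.gamma_nonneg
  rcases le_total 0 ((V (m + 2) (m + 2) - V (m + 1) (m + 1)) - (V (m + 2) 1 - V (m + 1) 1))
    with hX | hX
  · exact (mul_le_mul_of_nonneg_right (mul_le_mul_of_nonneg_left hμ0 hγ) hX).trans hgap
  · exact (mul_nonpos_of_nonneg_of_nonpos (mul_nonneg hγ hμ) hX).trans zero_le_one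

theorem vertical_increment_le (hV : IsBellmanSolution γ lam0 lam1 lam2 c0 c1 c2 ρ V)
    (hlam : lam2 ≤ lam0) (hc01 : c0 ≤ c1) (hc02 : c0 ≤ c2) (hb : 1 ≤ b) (hbm : b < m) :
    V (m + 1) (b + 2) - V (m + 1) (b + 1) ≤ V (b + 2) (b + 2) - V (b + 1) (b + 1) := by
  obtain ⟨D, -, hD⟩ := hV.exists_sub_le
  have hγ := hV.gamma_nonneg
  have ⟨hl0, hl0'⟩ := hV.lam0_mem
  have ⟨hl1, hl1'⟩ := hV.lam1_mem
  have ⟨hl2, hl2'⟩ := hV.lam2_mem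
  suffices (V (m + 1) (b + 2) - V (m + 1) (b + 1)) - (V (b + 2) (b + 2) - V (b + 1) (b + 1)) ≤ 0
    by linarith
  refine nonpos_of_le_discounted_succ hγ hV.rho_nonneg hV.gamma_mul_rho_lt_one (K := 2 * D)
    (P := fun m b ↦ 1 ≤ b ∧ b < m)
    (f := fun m b ↦
      (V (m + 1) (b + 2) - V (m + 1) (b + 1)) - (V (b + 2) (b + 2) - V (b + 1) (b + 1)))
    ?_ ?_ ⟨hb, hbm⟩
  · rintro m b ⟨h₁, h₂⟩
    have hC := hD (m := m) (m₁ := m + 1) (m₂ := m + 1) (b₁ := b + 2) (b₂ := b + 1)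
      (by omega) (by omega) (by omega) (by omega) (by omega) (by omega)
    have hB := hD (m := m) (m₁ := b + 1) (m₂ := b + 2) (b₁ := b + 1) (b₂ := b + 2)
      (by omega) le_rfl (by omega) (by omega) le_rfl (by omega)
    linarith
  rintro m b ⟨h₁, h₂⟩
  have hd₁ := hV.diag_eq_Q0 hlam hc01 hc02 (m := b + 1) (by omega)
  have hd₂ := hV.diag_eq_Q0 hlam hc01 hc02 (m := b + 2) (by omega)
  simp only [Q0, Nat.cast_add, Nat.cast_one, Nat.cast_ofNat, add_assoc, Nat.reduceAdd] at hd₁ hd₂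
  rcases hV.eq_Q0_or_Q1_or_Q2 (m := m + 1) (b := b + 1) (by omega) (by omega) with h | h | h
  · refine ⟨1 - lam0, 0, b + 1, b + 1, by linarith, le_rfl, by linarith, ⟨by omega, by omega⟩,
      ⟨by omega, by omega⟩, ?_⟩
    have hle := hV.le_Q0 (m := m + 1) (b := b + 2) (by omega) (by omega)
    have hmul := mul_le_mul_of_nonneg_left
      (hV.le_succ_fst (m := b + 2) (b := 1) le_rfl (by omega)) (mul_nonneg hγ hl0)
    simp only [Q0, Nat.cast_add, Nat.cast_one, add_assoc, Nat.reduceAdd] at h hle ⊢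
    linarith
  · refine ⟨1 - lam1, 0, b + 1, b + 1, by linarith, le_rfl, by linarith, ⟨by omega, by omega⟩,
      ⟨by omega, by omega⟩, ?_⟩
    have hle := hV.le_Q1 (m := m + 1) (b := b + 2) (by omega) (by omega)
    have hgap := hV.increment_gap_le hlam hc01 hc02 (b + 1)
    simp only [Q1, Nat.cast_add, Nat.cast_one, add_assoc, Nat.reduceAdd] at h hle ⊢
    linarith
  · refine ⟨1 - lam2, 0, b + 1, b + 1, by linarith, le_rfl, by linarith, ⟨by omega, by omega⟩,
      ⟨by omega, by omega⟩, ?_⟩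
    have hle := hV.le_Q2 (m := m + 1) (b := b + 2) (by omega) (by omega)
    have hgap := hV.mul_increment_gap_le hlam hc01 hc02 (sub_nonneg.2 hlam)
      (sub_le_self _ hl2) (b + 1)
    simp only [Q2, Nat.cast_add, Nat.cast_one, add_assoc, Nat.reduceAdd] at h hle ⊢
    linarith

end IsBellmanSolution

theorem vertical_increment_bound_general
    (γ lam0 lam1 lam2 c0 c1 c2 ρ : ℝ)
    (hγ0 : 0 < γ)
    (hl0 : 0 < lam0) (hl0' : lam0 < 1)
    (hl1 : 0 < lam1) (hl1' : lam1 < 1)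
    (hl2 : 0 < lam2) (hl2' : lam2 < 1)
    (hord1 : lam2 ≤ lam0)
    (hord3 : c0 ≤ c1) (hord4 : c1 ≤ c2)
    (hρ1 : 1 < ρ) (hρ2 : ρ < 1 / γ)
    (Vstar : ℕ → ℕ → ℝ)
    (hnorm : ∃ C : ℝ, ∀ m b : ℕ, 1 ≤ b → b ≤ m → |Vstar m b| ≤ C * ρ ^ m)
    (hfix : ∀ m b : ℕ, 1 ≤ b → b ≤ m →
      Vstar m b = Tbell γ lam0 lam1 lam2 c0 c1 c2 Vstar m b) :
    ∀ m b : ℕ, 1 ≤ b → b + 1 ≤ m →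
      Vstar (m + 1) (b + 2) - Vstar (m + 1) (b + 1) ≤
        Vstar (b + 2) (b + 2) - Vstar (b + 1) (b + 1) := by
  have hγρ : γ * ρ < 1 := by
    rw [lt_div_iff₀ hγ0] at hρ2
    linarith
  have hV : IsBellmanSolution γ lam0 lam1 lam2 c0 c1 c2 ρ Vstar :=
    { gamma_nonneg := hγ0.le
      one_le_rho := hρ1.le
      gamma_mul_rho_lt_one := hγρ
      lam0_mem := ⟨hl0.le, hl0'.le⟩
      lam1_mem := ⟨hl1.le, hl1'.le⟩
      lam2_mem := ⟨hl2.le, hl2'.le⟩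
      growth := hnorm
      fixed := hfix }
  intro m b hb hbm
  exact hV.vertical_increment_le hord1 hord3 (hord3.trans hord4) hb hbm

/-- The vertical increment `C(m,b) = V★(m+1,b+2) − V★(m+1,b+1)` is
bounded above by the diagonal increment `B(b+1) = V★(b+2,b+2) − V★(b+1,b+1)`. -/
theorem vertical_increment_bound
    (γ lam0 lam1 lam2 c0 c1 c2 ρ : ℝ)
    (hγ0 : 0 < γ) (hγ1 : γ < 1)
    (hl0 : 0 < lam0) (hl0' : lam0 < 1)
    (hl1 : 0 < lam1) (hl1' : lam1 < 1)
    (hl2 : 0 < lam2) (hl2' : lam2 < 1)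
    (hc0 : 0 ≤ c0) (hc1 : 0 ≤ c1) (hc2 : 0 ≤ c2)
    (hord1 : lam2 ≤ lam0) (hord2 : lam0 ≤ lam1)
    (hord3 : c0 ≤ c1) (hord4 : c1 ≤ c2)
    (hρ1 : 1 < ρ) (hρ2 : ρ < 1 / γ)
    (Vstar : ℕ → ℕ → ℝ)
    (hnorm : ∃ C : ℝ, ∀ m b : ℕ, 1 ≤ b → b ≤ m → |Vstar m b| ≤ C * ρ ^ m)
    (hfix : ∀ m b : ℕ, 1 ≤ b → b ≤ m →
      Vstar m b = Tbell γ lam0 lam1 lam2 c0 c1 c2 Vstar m b) :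
    ∀ m b : ℕ, 1 ≤ b → b + 1 ≤ m →
      Vstar (m + 1) (b + 2) - Vstar (m + 1) (b + 1) ≤
        Vstar (b + 2) (b + 2) - Vstar (b + 1) (b + 1) :=
  vertical_increment_bound_general γ lam0 lam1 lam2 c0 c1 c2 ρ hγ0 hl0 hl0' hl1 hl1' hl2 hl2' hord1
    hord3 hord4 hρ1 hρ2 Vstar hnorm hfix
end

section
/- For each fixed b ≥ 1, the action-difference functions are nondecreasing in the first coordinate: for every m ≥ b, Δ01(m+1,b) ≥ Δ01(m,b), Δ02(m+1,b) ≥ Δ02(m,b), and Δ21(m+1,b) ≥ Δ21(m,b). -/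
/-- Action-difference function `Δ01 = Q0(V) − Q1(V)`. -/
noncomputable def D01 (γ lam0 lam1 c0 c1 : ℝ) (V : ℕ → ℕ → ℝ) (m b : ℕ) : ℝ :=
  Q0 γ lam0 c0 V m b - Q1 γ lam1 c1 V m b

/-- Action-difference function `Δ02 = Q0(V) − Q2(V)`. -/
noncomputable def D02 (γ lam0 lam2 c0 c2 : ℝ) (V : ℕ → ℕ → ℝ) (m b : ℕ) : ℝ :=
  Q0 γ lam0 c0 V m b - Q2 γ lam2 c2 V m b

/-- Action-difference function `Δ21 = Q2(V) − Q1(V)`. -/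
noncomputable def D21 (γ lam2 lam1 c2 c1 : ℝ) (V : ℕ → ℕ → ℝ) (m b : ℕ) : ℝ :=
  Q2 γ lam2 c2 V m b - Q1 γ lam1 c1 V m b

/-!
Write `incr V m b = V (m + 1) b - V m b`. Differencing the action values in `m`, the increment
of each `Δ` at `(m, b)` is `γ` times a combination of `A = incr V★ (m + 1) 1` and
`B = incr V★ (m + 1) (b + 1)`: `λ0 A + (λ1 - λ0) B`, `λ0 A - (λ0 - λ2) B` and `(λ1 - λ2) B`.
Hence it suffices that `1 / (1 - γ (1 - λ1)) ≤ incr V★ ≤ 1 / (1 - γ)`, since Assumption 1 says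
precisely that `(λ0 - λ2) / (1 - γ) ≤ λ0 / (1 - γ (1 - λ1))`.

The two bounds are the fixed points of `x ↦ 1 + γ x` and `x ↦ 1 + γ (1 - λ1) x`. Through the
Bellman equation, the amount by which `incr V★` violates either bound at level `m` is at most `γ`
times the violation at some state of level `m + 1`. The weighted-norm bound makes violations grow
at most like `ρ ^ m`, and `γ ρ < 1`, so iterating forces them to vanish.
-/

open Filter Topology

theorem min_min_sub_min_min_le {α : Type*} [AddCommGroup α] [LinearOrder α] [IsOrderedAddMonoid α]
    {a b c a' b' c' t : α} (ha : a - a' ≤ t) (hb : b - b' ≤ t) (hc : c - c' ≤ t) :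
    min a (min b c) - min a' (min b' c') ≤ t := by
  rw [sub_le_iff_le_add', ← min_add_add_right, ← min_add_add_right]
  exact min_le_min (sub_le_iff_le_add'.1 ha)
    (min_le_min (sub_le_iff_le_add'.1 hb) (sub_le_iff_le_add'.1 hc))

theorem nonpos_of_le_mul_succ {ι : Type*} (P : ℕ → ι → Prop) (y : ℕ → ι → ℝ) {q r C : ℝ}
    (hq : 0 ≤ q) (hr : 0 ≤ r) (hqr : q * r < 1)
    (hgrowth : ∀ n i, P n i → y n i ≤ C * r ^ n)
    (hstep : ∀ n i, P n i → ∃ j, P (n + 1) j ∧ y n i ≤ q * y (n + 1) j) :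
    ∀ n i, P n i → y n i ≤ 0 := by
  have hiter : ∀ k n i, P n i → y n i ≤ C * r ^ n * (q * r) ^ k := by
    intro k
    induction k with
    | zero => simpa using hgrowth
    | succ k ih =>
      intro n i hni
      obtain ⟨j, hj, hle⟩ := hstep n i hni
      calc y n i ≤ q * y (n + 1) j := hle
        _ ≤ q * (C * r ^ (n + 1) * (q * r) ^ k) := by gcongr; exact ih _ _ hj
        _ = C * r ^ n * (q * r) ^ (k + 1) := by ring
  intro n i hni
  have hlim : Tendsto (fun k => C * r ^ n * (q * r) ^ k) atTop (𝓝 0) := by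
    simpa using (tendsto_pow_atTop_nhds_zero_of_lt_one (by positivity) hqr).const_mul (C * r ^ n)
  exact ge_of_tendsto' hlim fun k => hiter k n i hni

def incr (V : ℕ → ℕ → ℝ) (m b : ℕ) : ℝ :=
  V (m + 1) b - V m b

section Increments

variable (γ : ℝ) (V : ℕ → ℕ → ℝ) (m b : ℕ)

theorem Q0_succ_sub (lam0 c0 : ℝ) :
    Q0 γ lam0 c0 V (m + 1) b - Q0 γ lam0 c0 V m b =
      1 + γ * (lam0 * incr V (m + 1) 1 + (1 - lam0) * incr V (m + 1) (b + 1)) := by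
  unfold Q0 incr; push_cast; ring

theorem Q1_succ_sub (lam1 c1 : ℝ) :
    Q1 γ lam1 c1 V (m + 1) b - Q1 γ lam1 c1 V m b =
      1 + γ * ((1 - lam1) * incr V (m + 1) (b + 1)) := by
  unfold Q1 incr; push_cast; ring

theorem Q2_succ_sub (lam2 c2 : ℝ) :
    Q2 γ lam2 c2 V (m + 1) b - Q2 γ lam2 c2 V m b =
      1 + γ * ((1 - lam2) * incr V (m + 1) (b + 1)) := by
  unfold Q2 incr; push_cast; ring

theorem D01_succ_sub (lam0 lam1 c0 c1 : ℝ) :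
    D01 γ lam0 lam1 c0 c1 V (m + 1) b - D01 γ lam0 lam1 c0 c1 V m b =
      γ * (lam0 * incr V (m + 1) 1 + (lam1 - lam0) * incr V (m + 1) (b + 1)) := by
  unfold D01
  linear_combination Q0_succ_sub γ V m b lam0 c0 - Q1_succ_sub γ V m b lam1 c1

theorem D02_succ_sub (lam0 lam2 c0 c2 : ℝ) :
    D02 γ lam0 lam2 c0 c2 V (m + 1) b - D02 γ lam0 lam2 c0 c2 V m b =
      γ * (lam0 * incr V (m + 1) 1 - (lam0 - lam2) * incr V (m + 1) (b + 1)) := by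
  unfold D02
  linear_combination Q0_succ_sub γ V m b lam0 c0 - Q2_succ_sub γ V m b lam2 c2

theorem D21_succ_sub (lam2 lam1 c2 c1 : ℝ) :
    D21 γ lam2 lam1 c2 c1 V (m + 1) b - D21 γ lam2 lam1 c2 c1 V m b =
      γ * ((lam1 - lam2) * incr V (m + 1) (b + 1)) := by
  unfold D21
  linear_combination Q2_succ_sub γ V m b lam2 c2 - Q1_succ_sub γ V m b lam1 c1

end Increments

section BellmanStep

variable {γ lam0 lam1 lam2 : ℝ} (c0 c1 c2 : ℝ) (V : ℕ → ℕ → ℝ) (m b : ℕ)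

theorem incr_Tbell_sub_le (hγ0 : 0 ≤ γ) (hγ1 : γ < 1) (hl0 : 0 ≤ lam0) (hl0' : lam0 ≤ 1)
    (hl1 : 0 ≤ lam1) (hl1' : lam1 ≤ 1) (hl2 : 0 ≤ lam2) (hl2' : lam2 ≤ 1) :
    incr (Tbell γ lam0 lam1 lam2 c0 c1 c2 V) m b - (1 - γ)⁻¹ ≤
      γ * max (max (incr V (m + 1) 1 - (1 - γ)⁻¹) 0)
        (max (incr V (m + 1) (b + 1) - (1 - γ)⁻¹) 0) := by
  have hM : 1 + γ * (1 - γ)⁻¹ = (1 - γ)⁻¹ := by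
    field_simp [sub_ne_zero.2 hγ1.ne']; ring
  have hM0 : 0 ≤ (1 - γ)⁻¹ := inv_nonneg.2 (by linarith)
  have e0 := Q0_succ_sub γ V m b lam0 c0
  have e1 := Q1_succ_sub γ V m b lam1 c1
  have e2 := Q2_succ_sub γ V m b lam2 c2
  set M := (1 - γ)⁻¹
  set A := incr V (m + 1) 1
  set B := incr V (m + 1) (b + 1)
  set X := max (max (A - M) 0) (max (B - M) 0)
  have hA : A - M ≤ X := (le_max_left _ _).trans (le_max_left _ _)
  have hB : B - M ≤ X := (le_max_left _ _).trans (le_max_right _ _)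
  have hX : 0 ≤ X := (le_max_right _ _).trans (le_max_left _ _)
  have step : ∀ E, E ≤ X + M → 1 + γ * E ≤ γ * X + M := fun E hE => by
    nlinarith [mul_le_mul_of_nonneg_left hE hγ0]
  have h0 : lam0 * A + (1 - lam0) * B ≤ X + M := by
    nlinarith [mul_le_mul_of_nonneg_left hA hl0, mul_le_mul_of_nonneg_left hB (sub_nonneg.2 hl0')]
  have h1 : (1 - lam1) * B ≤ X + M := by
    nlinarith [mul_le_mul_of_nonneg_left hB (sub_nonneg.2 hl1'), mul_nonneg hl1 hX,
      mul_nonneg hl1 hM0]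
  have h2 : (1 - lam2) * B ≤ X + M := by
    nlinarith [mul_le_mul_of_nonneg_left hB (sub_nonneg.2 hl2'), mul_nonneg hl2 hX,
      mul_nonneg hl2 hM0]
  rw [sub_le_iff_le_add]
  refine min_min_sub_min_min_le ?_ ?_ ?_
  · exact e0 ▸ step _ h0
  · exact e1 ▸ step _ h1
  · exact e2 ▸ step _ h2

theorem sub_incr_Tbell_le (hγ0 : 0 ≤ γ) (hγ1 : γ < 1) (hl0 : 0 ≤ lam0) (hl0' : lam0 ≤ 1)
    (hl1 : 0 ≤ lam1) (hl1' : lam1 ≤ 1) (hl2 : 0 ≤ lam2) (hl21 : lam2 ≤ lam1) :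
    (1 - γ * (1 - lam1))⁻¹ - incr (Tbell γ lam0 lam1 lam2 c0 c1 c2 V) m b ≤
      γ * max (max ((1 - γ * (1 - lam1))⁻¹ - incr V (m + 1) 1) 0)
        (max ((1 - γ * (1 - lam1))⁻¹ - incr V (m + 1) (b + 1)) 0) := by
  have hq : γ * (1 - lam1) < 1 := by nlinarith
  have hL : 1 + γ * (1 - lam1) * (1 - γ * (1 - lam1))⁻¹ = (1 - γ * (1 - lam1))⁻¹ := by
    field_simp [sub_ne_zero.2 hq.ne']; ring
  have hL0 : 0 ≤ (1 - γ * (1 - lam1))⁻¹ := inv_nonneg.2 (by linarith)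
  have e0 := Q0_succ_sub γ V m b lam0 c0
  have e1 := Q1_succ_sub γ V m b lam1 c1
  have e2 := Q2_succ_sub γ V m b lam2 c2
  set L := (1 - γ * (1 - lam1))⁻¹
  set A := incr V (m + 1) 1
  set B := incr V (m + 1) (b + 1)
  set X := max (max (L - A) 0) (max (L - B) 0)
  have hA : L - A ≤ X := (le_max_left _ _).trans (le_max_left _ _)
  have hB : L - B ≤ X := (le_max_left _ _).trans (le_max_right _ _)
  have hX : 0 ≤ X := (le_max_right _ _).trans (le_max_left _ _)
  have step : ∀ E, (1 - lam1) * L - X ≤ E → L - γ * X ≤ 1 + γ * E := fun E hE => by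
    nlinarith [mul_le_mul_of_nonneg_left hE hγ0]
  have h0 : (1 - lam1) * L - X ≤ lam0 * A + (1 - lam0) * B := by
    nlinarith [mul_le_mul_of_nonneg_left hA hl0, mul_le_mul_of_nonneg_left hB (sub_nonneg.2 hl0'),
      mul_nonneg hl1 hL0]
  have h1 : (1 - lam1) * L - X ≤ (1 - lam1) * B := by
    nlinarith [mul_le_mul_of_nonneg_left hB (sub_nonneg.2 hl1'), mul_nonneg hl1 hX]
  have h2 : (1 - lam1) * L - X ≤ (1 - lam2) * B := by
    nlinarith [mul_le_mul_of_nonneg_left hB (sub_nonneg.2 (hl21.trans hl1')), mul_nonneg hl2 hX,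
      mul_nonneg (sub_nonneg.2 hl21) hL0]
  have key : Tbell γ lam0 lam1 lam2 c0 c1 c2 V m b - Tbell γ lam0 lam1 lam2 c0 c1 c2 V (m + 1) b
      ≤ γ * X - L := by
    refine min_min_sub_min_min_le ?_ ?_ ?_
    · linarith [step _ h0]
    · linarith [step _ h1]
    · linarith [step _ h2]
  unfold incr
  linarith

end BellmanStep

theorem abs_incr_sub_le {V : ℕ → ℕ → ℝ} {ρ C : ℝ} (hρ : 1 ≤ ρ)
    (hV : ∀ m b : ℕ, 1 ≤ b → b ≤ m → |V m b| ≤ C * ρ ^ m) (K : ℝ) {m b : ℕ} (hb : 1 ≤ b)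
    (hbm : b ≤ m) : |incr V m b - K| ≤ (C * (ρ + 1) + |K|) * ρ ^ m := by
  have h1 := hV (m + 1) b hb (by omega)
  have h0 := hV m b hb hbm
  have hK : |K| ≤ |K| * ρ ^ m := le_mul_of_one_le_right (abs_nonneg K) (one_le_pow₀ hρ)
  calc |incr V m b - K| ≤ |V (m + 1) b| + |V m b| + |K| := by
        unfold incr
        exact (abs_sub _ _).trans (by gcongr; exact abs_sub _ _)
    _ ≤ (C * (ρ + 1) + |K|) * ρ ^ m := by rw [pow_succ] at h1; nlinarith

theorem nonpos_of_le_mul_max_succ {γ ρ C : ℝ} (hγ : 0 ≤ γ) (hρ : 0 ≤ ρ) (hγρ : γ * ρ < 1)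
    (y : ℕ → ℕ → ℝ) (hgrowth : ∀ m b : ℕ, 1 ≤ b → b ≤ m → y m b ≤ C * ρ ^ m)
    (hstep : ∀ m b : ℕ, 1 ≤ b → b ≤ m → y m b ≤ γ * max (y (m + 1) 1) (y (m + 1) (b + 1))) :
    ∀ m b : ℕ, 1 ≤ b → b ≤ m → y m b ≤ 0 := by
  have := nonpos_of_le_mul_succ (fun m b => 1 ≤ b ∧ b ≤ m) y hγ hρ hγρ
    (fun m b h => hgrowth m b h.1 h.2) ?_
  · exact fun m b hb hbm => this m b ⟨hb, hbm⟩
  rintro m b ⟨hb, hbm⟩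
  rcases max_choice (y (m + 1) 1) (y (m + 1) (b + 1)) with h | h
  · exact ⟨1, ⟨le_rfl, by omega⟩, h ▸ hstep m b hb hbm⟩
  · exact ⟨b + 1, ⟨by omega, by omega⟩, h ▸ hstep m b hb hbm⟩

section FixedPoint

variable {γ lam0 lam1 lam2 c0 c1 c2 ρ C : ℝ} {V : ℕ → ℕ → ℝ}

theorem incr_Tbell_of_fixed
    (hfix : ∀ m b : ℕ, 1 ≤ b → b ≤ m → V m b = Tbell γ lam0 lam1 lam2 c0 c1 c2 V m b)
    {m b : ℕ} (hb : 1 ≤ b) (hbm : b ≤ m) :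
    incr (Tbell γ lam0 lam1 lam2 c0 c1 c2 V) m b = incr V m b := by
  rw [incr, incr, ← hfix _ _ hb (by omega), ← hfix _ _ hb hbm]

theorem incr_le_of_fixed (hγ0 : 0 ≤ γ) (hγ1 : γ < 1) (hl0 : 0 ≤ lam0) (hl0' : lam0 ≤ 1)
    (hl1 : 0 ≤ lam1) (hl1' : lam1 ≤ 1) (hl2 : 0 ≤ lam2) (hl2' : lam2 ≤ 1) (hρ : 1 ≤ ρ)
    (hγρ : γ * ρ < 1)
    (hV : ∀ m b : ℕ, 1 ≤ b → b ≤ m → |V m b| ≤ C * ρ ^ m)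
    (hfix : ∀ m b : ℕ, 1 ≤ b → b ≤ m → V m b = Tbell γ lam0 lam1 lam2 c0 c1 c2 V m b) :
    ∀ m b : ℕ, 1 ≤ b → b ≤ m → incr V m b ≤ (1 - γ)⁻¹ := by
  have h := nonpos_of_le_mul_max_succ hγ0 (by linarith) hγρ
    (fun m b => max (incr V m b - (1 - γ)⁻¹) 0)
    (fun m b hb hbm => max_le ((le_abs_self _).trans (abs_incr_sub_le hρ hV _ hb hbm))
      ((abs_nonneg _).trans (abs_incr_sub_le hρ hV _ hb hbm)))
    (fun m b hb hbm => max_le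
      (by
        rw [← incr_Tbell_of_fixed hfix hb hbm]
        exact incr_Tbell_sub_le c0 c1 c2 V m b hγ0 hγ1 hl0 hl0' hl1 hl1' hl2 hl2')
      (mul_nonneg hγ0 ((le_max_right _ _).trans (le_max_left _ _))))
  intro m b hb hbm
  linarith [le_max_left (incr V m b - (1 - γ)⁻¹) 0, h m b hb hbm]

theorem le_incr_of_fixed (hγ0 : 0 ≤ γ) (hγ1 : γ < 1) (hl0 : 0 ≤ lam0) (hl0' : lam0 ≤ 1)
    (hl1 : 0 ≤ lam1) (hl1' : lam1 ≤ 1) (hl2 : 0 ≤ lam2) (hl21 : lam2 ≤ lam1) (hρ : 1 ≤ ρ)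
    (hγρ : γ * ρ < 1)
    (hV : ∀ m b : ℕ, 1 ≤ b → b ≤ m → |V m b| ≤ C * ρ ^ m)
    (hfix : ∀ m b : ℕ, 1 ≤ b → b ≤ m → V m b = Tbell γ lam0 lam1 lam2 c0 c1 c2 V m b) :
    ∀ m b : ℕ, 1 ≤ b → b ≤ m → (1 - γ * (1 - lam1))⁻¹ ≤ incr V m b := by
  have h := nonpos_of_le_mul_max_succ hγ0 (by linarith) hγρ
    (fun m b => max ((1 - γ * (1 - lam1))⁻¹ - incr V m b) 0)
    (fun m b hb hbm => max_le
      ((le_abs_self _).trans (abs_sub_comm (incr V m b) _ ▸ abs_incr_sub_le hρ hV _ hb hbm))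
      ((abs_nonneg _).trans (abs_incr_sub_le hρ hV _ hb hbm)))
    (fun m b hb hbm => max_le
      (by
        rw [← incr_Tbell_of_fixed hfix hb hbm]
        exact sub_incr_Tbell_le c0 c1 c2 V m b hγ0 hγ1 hl0 hl0' hl1 hl1' hl2 hl21)
      (mul_nonneg hγ0 ((le_max_right _ _).trans (le_max_left _ _))))
  intro m b hb hbm
  linarith [le_max_left ((1 - γ * (1 - lam1))⁻¹ - incr V m b) 0, h m b hb hbm]

end FixedPoint

theorem sub_mul_inv_le_mul_inv_of_assumption {γ lam0 lam1 lam2 : ℝ} (hγ0 : 0 ≤ γ) (hγ1 : γ < 1)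
    (hl0 : 0 < lam0) (hl1 : 0 < lam1) (hl1' : lam1 ≤ 1) (hl2 : 0 ≤ lam2)
    (hAss : γ ≤ lam2 / (lam0 * lam1 + lam2 * (1 - lam1))) :
    (lam0 - lam2) * (1 - γ)⁻¹ ≤ lam0 * (1 - γ * (1 - lam1))⁻¹ := by
  have hden : 0 < lam0 * lam1 + lam2 * (1 - lam1) := by
    nlinarith [mul_pos hl0 hl1, mul_nonneg hl2 (sub_nonneg.2 hl1')]
  have hAss' := (le_div_iff₀ hden).1 hAss
  rw [← div_eq_mul_inv, ← div_eq_mul_inv, div_le_div_iff₀ (by linarith) (by nlinarith)]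
  nlinarith

theorem deltas_nondecreasing_in_m_general
    (γ lam0 lam1 lam2 c0 c1 c2 ρ : ℝ)
    (hγ0 : 0 < γ) (hγ1 : γ < 1)
    (hl0 : 0 < lam0) (hl0' : lam0 < 1)
    (hl1 : 0 < lam1) (hl1' : lam1 < 1)
    (hl2 : 0 < lam2) (hl2' : lam2 < 1)
    (hord1 : lam2 ≤ lam0) (hord2 : lam0 ≤ lam1)
    (hAss1 : γ ≤ lam2 / (lam0 * lam1 + lam2 * (1 - lam1)))
    (hρ1 : 1 < ρ) (hρ2 : ρ < 1 / γ)
    (Vstar : ℕ → ℕ → ℝ)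
    (hnorm : ∃ C : ℝ, ∀ m b : ℕ, 1 ≤ b → b ≤ m → |Vstar m b| ≤ C * ρ ^ m)
    (hfix : ∀ m b : ℕ, 1 ≤ b → b ≤ m →
      Vstar m b = Tbell γ lam0 lam1 lam2 c0 c1 c2 Vstar m b) :
    ∀ m b : ℕ, 1 ≤ b → b ≤ m →
      D01 γ lam0 lam1 c0 c1 Vstar (m + 1) b ≥ D01 γ lam0 lam1 c0 c1 Vstar m b ∧
      D02 γ lam0 lam2 c0 c2 Vstar (m + 1) b ≥ D02 γ lam0 lam2 c0 c2 Vstar m b ∧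
      D21 γ lam2 lam1 c2 c1 Vstar (m + 1) b ≥ D21 γ lam2 lam1 c2 c1 Vstar m b := by
  obtain ⟨C, hV⟩ := hnorm
  have hγρ : γ * ρ < 1 := by rwa [lt_div_iff₀ hγ0, mul_comm] at hρ2
  have hlow := le_incr_of_fixed hγ0.le hγ1 hl0.le hl0'.le hl1.le hl1'.le hl2.le
    (hord1.trans hord2) hρ1.le hγρ hV hfix
  have hup := incr_le_of_fixed hγ0.le hγ1 hl0.le hl0'.le hl1.le hl1'.le hl2.le hl2'.le
    hρ1.le hγρ hV hfix
  have hcross := sub_mul_inv_le_mul_inv_of_assumption hγ0.le hγ1 hl0 hl1 hl1'.le hl2.le hAss1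
  have hL : 0 < (1 - γ * (1 - lam1))⁻¹ := inv_pos.2 (by nlinarith)
  intro m b hb hbm
  have hA := hlow (m + 1) 1 le_rfl (by omega)
  have hB := hlow (m + 1) (b + 1) (by omega) (by omega)
  have hB' := hup (m + 1) (b + 1) (by omega) (by omega)
  refine ⟨?_, ?_, ?_⟩ <;> rw [ge_iff_le, ← sub_nonneg]
  · rw [D01_succ_sub]
    exact mul_nonneg hγ0.le (by nlinarith)
  · rw [D02_succ_sub]
    have hA' : (lam0 - lam2) * incr Vstar (m + 1) (b + 1) ≤ lam0 * incr Vstar (m + 1) 1 :=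
      calc _ ≤ (lam0 - lam2) * (1 - γ)⁻¹ := mul_le_mul_of_nonneg_left hB' (sub_nonneg.2 hord1)
        _ ≤ lam0 * (1 - γ * (1 - lam1))⁻¹ := hcross
        _ ≤ lam0 * incr Vstar (m + 1) 1 := mul_le_mul_of_nonneg_left hA hl0.le
    exact mul_nonneg hγ0.le (sub_nonneg.2 hA')
  · rw [D21_succ_sub]
    exact mul_nonneg hγ0.le (by nlinarith)

/-- Under Assumption 1, for each fixed `b` the action-difference
functions `Δ01`, `Δ02`, `Δ21` are nondecreasing in the first coordinate. -/
theorem deltas_nondecreasing_in_m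
    (γ lam0 lam1 lam2 c0 c1 c2 ρ : ℝ)
    (hγ0 : 0 < γ) (hγ1 : γ < 1)
    (hl0 : 0 < lam0) (hl0' : lam0 < 1)
    (hl1 : 0 < lam1) (hl1' : lam1 < 1)
    (hl2 : 0 < lam2) (hl2' : lam2 < 1)
    (hc0 : 0 ≤ c0) (hc1 : 0 ≤ c1) (hc2 : 0 ≤ c2)
    (hord1 : lam2 ≤ lam0) (hord2 : lam0 ≤ lam1)
    (hord3 : c0 ≤ c1) (hord4 : c1 ≤ c2)
    (hAss1 : γ ≤ lam2 / (lam0 * lam1 + lam2 * (1 - lam1)))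
    (hρ1 : 1 < ρ) (hρ2 : ρ < 1 / γ)
    (Vstar : ℕ → ℕ → ℝ)
    (hnorm : ∃ C : ℝ, ∀ m b : ℕ, 1 ≤ b → b ≤ m → |Vstar m b| ≤ C * ρ ^ m)
    (hfix : ∀ m b : ℕ, 1 ≤ b → b ≤ m →
      Vstar m b = Tbell γ lam0 lam1 lam2 c0 c1 c2 Vstar m b) :
    ∀ m b : ℕ, 1 ≤ b → b ≤ m →
      D01 γ lam0 lam1 c0 c1 Vstar (m + 1) b ≥ D01 γ lam0 lam1 c0 c1 Vstar m b ∧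
      D02 γ lam0 lam2 c0 c2 Vstar (m + 1) b ≥ D02 γ lam0 lam2 c0 c2 Vstar m b ∧
      D21 γ lam2 lam1 c2 c1 Vstar (m + 1) b ≥ D21 γ lam2 lam1 c2 c1 Vstar m b :=
  deltas_nondecreasing_in_m_general γ lam0 lam1 lam2 c0 c1 c2 ρ hγ0 hγ1 hl0 hl0' hl1 hl1' hl2 hl2'
    hord1 hord2 hAss1 hρ1 hρ2 Vstar hnorm hfix
end
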